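/- arXiv:2407.17682 — 5 statements merged into one kernel-verified Lean document; each statement's English description precedes it below -/
import Mathlib

section
/- Let X be a finite nonempty set, E ⊆ X × X strongly connected, and C, F_1, …, F_K : E → ℝ. Let ψ : ℝ^K → ℝ and κ : ℝ^K → (X → ℝ) be functions such that for every θ ∈ ℝ^K, w_θ(y|x) = exp(C(x,y) + Σ_k θ_k F_k(x,y) + κ_θ(y) − κ_θ(x) − ψ(θ)) for (x,y) ∈ E (and 0 off E) is a Markov kernel on X. Then ψ is differentiable on ℝ^K and for every θ and every k ∈ {1,…,K}, the partial derivative ∂ψ/∂θ_k at θ equals Σ_{(x,y)∈E} p_{w_θ}^{(2)}(x,y) F_k(x,y), the expectation of F_k under the joint stationary distribution of w_θ. -/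
open scoped Classical
open Finset

/-- A (row-stochastic) Markov kernel on a finite set `X`: `w x y` means `w(y|x)`. -/
def IsMarkovKernel {X : Type*} [Fintype X] (w : X → X → ℝ) : Prop :=
  (∀ x y : X, 0 ≤ w x y) ∧ ∀ x : X, ∑ y : X, w x y = 1

/-- The directed graph `(X, E)` is strongly connected: from any `x` there is a
finite directed path along edges of `E` to any `y`. -/
def StronglyConnected {X : Type*} (E : Set (X × X)) : Prop :=
  ∀ x y : X, Relation.ReflTransGen (fun a b => (a, b) ∈ E) x y

/-- Membership in `W(X,E)`: a Markov kernel whose support is exactly `E`. -/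
def MemW {X : Type*} [Fintype X] (E : Set (X × X)) (w : X → X → ℝ) : Prop :=
  IsMarkovKernel w ∧ ∀ x y : X, 0 < w x y ↔ (x, y) ∈ E

/-- `p` is a stationary probability distribution of the kernel `w`. -/
def IsStationaryDist {X : Type*} [Fintype X] (w : X → X → ℝ) (p : X → ℝ) : Prop :=
  (∀ x : X, 0 ≤ p x) ∧ (∑ x : X, p x = 1) ∧ ∀ y : X, ∑ x : X, p x * w x y = p y

/-- The stationary distribution `p_w` of `w` (unique for `w ∈ W(X,E)` with
`(X,E)` strongly connected), obtained by choice from existence. -/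
noncomputable def statDist {X : Type*} [Fintype X] (w : X → X → ℝ) : X → ℝ :=
  if h : ∃ p : X → ℝ, IsStationaryDist w p then h.choose else fun _ => 0

/-- The divergence rate `D(v|w) = Σ_{(x,y)∈E} p_v(x) v(y|x) log (v(y|x)/w(y|x))`. -/
noncomputable def divRate {X : Type*} [Fintype X] (E : Set (X × X))
    (v w : X → X → ℝ) : ℝ :=
  ∑ x : X, ∑ y : X,
    if (x, y) ∈ E then statDist v x * v x y * Real.log (v x y / w x y) else 0

/-- `F_1, …, F_K` are linearly independent modulo
`N = {(x,y) ↦ κ(y) − κ(x) − c}` (as functions on `E`). -/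
def LinIndepModN {X : Type*} (E : Set (X × X)) {K : ℕ} (F : Fin K → X → X → ℝ) : Prop :=
  ∀ a : Fin K → ℝ,
    (∃ (κ : X → ℝ) (c : ℝ), ∀ x y : X, (x, y) ∈ E →
      ∑ k : Fin K, a k * F k x y = κ y - κ x - c) →
    a = 0

/-- Membership in the exponential family generated by `C, F_1, …, F_K`. -/
def MemExpFam {X : Type*} [Fintype X] (E : Set (X × X)) {K : ℕ}
    (C : X → X → ℝ) (F : Fin K → X → X → ℝ) (w : X → X → ℝ) : Prop :=
  MemW E w ∧ ∃ (θ : Fin K → ℝ) (κ : X → ℝ) (ψ : ℝ), ∀ x y : X, (x, y) ∈ E →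
    w x y = Real.exp (C x y + ∑ k : Fin K, θ k * F k x y + κ y - κ x - ψ)

/-- Membership in the mixture family `M(μ_1,…,μ_K)`:
`Σ_{(x,y)∈E} p_w(x) w(y|x) F_k(x,y) = μ_k` for all `k`. -/
def MemMix {X : Type*} [Fintype X] (E : Set (X × X)) {K : ℕ}
    (F : Fin K → X → X → ℝ) (μ : Fin K → ℝ) (w : X → X → ℝ) : Prop :=
  MemW E w ∧ ∀ k : Fin K,
    (∑ x : X, ∑ y : X, if (x, y) ∈ E then statDist w x * w x y * F k x y else 0) = μ k

/- ------------------------------------------------------------------ -/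
/- Auxiliary lemmas -/

lemma harmonic_const {X : Type*} [Fintype X] [Nonempty X] {E : Set (X × X)}
    (hE : StronglyConnected E) {w : X → X → ℝ}
    (hpos : ∀ x y : X, 0 < w x y ↔ (x, y) ∈ E)
    (hnn : ∀ x y : X, 0 ≤ w x y)
    (hsum : ∀ x : X, ∑ y : X, w x y = 1)
    {v : X → ℝ} (hv : ∀ x : X, ∑ y : X, w x y * v y = v x) :
    ∀ x y : X, v x = v y := by
  obtain ⟨xm, -, hmax⟩ := Finset.exists_max_image Finset.univ v
    ⟨Classical.arbitrary X, Finset.mem_univ _⟩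
  have hmax' : ∀ z : X, v z ≤ v xm := fun z => hmax z (Finset.mem_univ z)
  have step : ∀ a b : X, v a = v xm → (a, b) ∈ E → v b = v xm := by
    intro a b hva hab
    have hzero : ∑ y : X, w a y * (v xm - v y) = 0 := by
      have h1 : ∑ y : X, w a y * (v xm - v y)
          = (∑ y : X, w a y) * v xm - ∑ y : X, w a y * v y := by
        rw [Finset.sum_mul]
        rw [← Finset.sum_sub_distrib]
        exact Finset.sum_congr rfl fun y _ => by ring
      rw [h1, hsum a, hv a, one_mul, hva, sub_self]
    have hterm : ∀ y ∈ Finset.univ, (0:ℝ) ≤ w a y * (v xm - v y) :=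
      fun y _ => mul_nonneg (hnn a y) (by linarith [hmax' y])
    have := (Finset.sum_eq_zero_iff_of_nonneg hterm).mp hzero b (Finset.mem_univ b)
    have hwab : 0 < w a b := (hpos a b).mpr hab
    have : v xm - v b = 0 := by
      rcases mul_eq_zero.mp this with h | h
      · exact absurd h (ne_of_gt hwab)
      · exact h
    linarith
  have hall : ∀ z : X, v z = v xm := by
    intro z
    have hpath := hE xm z
    induction hpath with
    | refl => rfl
    | tail _ hbc ih => exact step _ _ ih hbc
  intro x y; rw [hall x, hall y]

lemma stat_exists {X : Type*} [Fintype X] [Nonempty X] {w : X → X → ℝ}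
    (hnn : ∀ x y : X, 0 ≤ w x y) (hsum : ∀ x : X, ∑ y : X, w x y = 1) :
    ∃ p : X → ℝ, IsStationaryDist w p := by
  classical
  set B : Matrix X X ℝ := Matrix.of (fun x y => w x y) - 1 with hB
  have hdetB : B.det = 0 := by
    have h1 : ∃ v ≠ 0, B.mulVec v = 0 := by
      refine ⟨fun _ => 1, ?_, ?_⟩
      · intro h0
        have := congrFun h0 (Classical.arbitrary X)
        norm_num at this
      · funext x
        simp [hB, Matrix.mulVec, dotProduct, Matrix.sub_apply, Matrix.one_apply,
          sub_mul, Finset.sum_sub_distrib, hsum x]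
    exact Matrix.exists_mulVec_eq_zero_iff.mp h1
  have hdetBT : (B.transpose).det = 0 := by rw [Matrix.det_transpose]; exact hdetB
  obtain ⟨q, hq0, hq⟩ := Matrix.exists_mulVec_eq_zero_iff.mpr hdetBT
  have hqstat : ∀ y : X, ∑ x : X, q x * w x y = q y := by
    intro y
    have := congrFun hq y
    simp [hB, Matrix.mulVec, dotProduct, Matrix.transpose_apply, Matrix.sub_apply,
      Matrix.one_apply, sub_mul, Finset.sum_sub_distrib] at this
    have h2 : ∑ x : X, w x y * q x - q y = 0 := by
      simpa [mul_comm] using this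
    calc ∑ x : X, q x * w x y = ∑ x : X, w x y * q x :=
          Finset.sum_congr rfl fun x _ => mul_comm _ _
    _ = q y := by linarith
  set r : X → ℝ := fun x => |q x| with hr
  have hrstat : ∀ y : X, ∑ x : X, r x * w x y = r y := by
    have hd : ∀ y : X, 0 ≤ (∑ x : X, r x * w x y) - r y := by
      intro y
      have h1 : r y = |∑ x : X, q x * w x y| := by rw [hqstat y]
      have h2 : |∑ x : X, q x * w x y| ≤ ∑ x : X, r x * w x y := by
        refine le_trans (Finset.abs_sum_le_sum_abs _ _) ?_
        refine Finset.sum_le_sum fun x _ => ?_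
        rw [abs_mul, abs_of_nonneg (hnn x y)]
      linarith
    have hsumd : ∑ y : X, ((∑ x : X, r x * w x y) - r y) = 0 := by
      rw [Finset.sum_sub_distrib]
      rw [Finset.sum_comm]
      have : ∀ x : X, ∑ y : X, r x * w x y = r x := by
        intro x; rw [← Finset.mul_sum, hsum x, mul_one]
      rw [Finset.sum_congr rfl fun x _ => this x, sub_self]
    intro y
    have := (Finset.sum_eq_zero_iff_of_nonneg (fun y _ => hd y)).mp hsumd y (Finset.mem_univ y)
    linarith
  have hrpos : 0 < ∑ x : X, r x := by
    obtain ⟨x, hx⟩ : ∃ x, q x ≠ 0 := by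
      by_contra h; push_neg at h; exact hq0 (funext h)
    have h1 : 0 < r x := abs_pos.mpr hx
    have h2 : r x ≤ ∑ x : X, r x :=
      Finset.single_le_sum (fun x _ => abs_nonneg (q x)) (Finset.mem_univ x)
    linarith
  refine ⟨fun x => r x / (∑ x : X, r x), fun x => div_nonneg (abs_nonneg _) hrpos.le, ?_, ?_⟩
  · rw [← Finset.sum_div, div_self hrpos.ne']
  · intro y
    show ∑ x : X, r x / (∑ x : X, r x) * w x y = r y / (∑ x : X, r x)
    calc ∑ x : X, r x / (∑ x : X, r x) * w x y
        = (∑ x : X, r x * w x y) / (∑ x : X, r x) := by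
          rw [Finset.sum_div]; exact Finset.sum_congr rfl fun x _ => by ring
      _ = r y / (∑ x : X, r x) := by rw [hrstat y]

lemma eigen_unique {X : Type*} [Fintype X] [Nonempty X] {E : Set (X × X)}
    (hE : StronglyConnected E) (c : X → X → ℝ) (x0 : X)
    (v1 v2 : X → ℝ) (s1 s2 : ℝ)
    (h1 : ∀ x : X, ∑ y : X, (if (x,y) ∈ E then Real.exp (c x y + v1 y - v1 x - s1) else 0) = 1)
    (h2 : ∀ x : X, ∑ y : X, (if (x,y) ∈ E then Real.exp (c x y + v2 y - v2 x - s2) else 0) = 1)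
    (h0 : v1 x0 = v2 x0) :
    s1 = s2 ∧ v1 = v2 := by
  classical
  set w1 : X → X → ℝ := fun x y => if (x,y) ∈ E then Real.exp (c x y + v1 y - v1 x - s1) else 0
    with hw1
  have hpos : ∀ x y : X, 0 < w1 x y ↔ (x, y) ∈ E := by
    intro x y; by_cases h : (x,y) ∈ E <;> simp [hw1, h, Real.exp_pos]
  have hnn : ∀ x y : X, 0 ≤ w1 x y := by
    intro x y; by_cases h : (x,y) ∈ E <;> simp [hw1, h, (Real.exp_pos _).le]
  set u : X → ℝ := fun x => v2 x - v1 x with hu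
  set t : ℝ := s2 - s1 with ht
  have hkey : ∀ x : X, ∑ y : X, w1 x y * Real.exp (u y) = Real.exp (u x) * Real.exp t := by
    intro x
    have : ∀ y : X, w1 x y * Real.exp (u y)
        = (if (x,y) ∈ E then Real.exp (c x y + v2 y - v2 x - s2) else 0)
            * (Real.exp (u x) * Real.exp t) := by
      intro y
      by_cases h : (x,y) ∈ E
      · simp only [hw1, if_pos h, ← Real.exp_add]
        congr 1
        simp only [hu, ht]; ring
      · simp [hw1, if_neg h]
    rw [Finset.sum_congr rfl fun y _ => this y, ← Finset.sum_mul, h2 x, one_mul]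
  have ht0 : t = 0 := by
    obtain ⟨xm, -, hmax⟩ := Finset.exists_max_image Finset.univ u
      ⟨Classical.arbitrary X, Finset.mem_univ _⟩
    obtain ⟨xn, -, hmin⟩ := Finset.exists_min_image Finset.univ u
      ⟨Classical.arbitrary X, Finset.mem_univ _⟩
    have hle : Real.exp (u xm) * Real.exp t ≤ Real.exp (u xm) := by
      rw [← hkey xm]
      calc ∑ y : X, w1 xm y * Real.exp (u y)
          ≤ ∑ y : X, w1 xm y * Real.exp (u xm) := by
            refine Finset.sum_le_sum fun y _ => ?_
            exact mul_le_mul_of_nonneg_left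
              (Real.exp_le_exp.mpr (hmax y (Finset.mem_univ y))) (hnn xm y)
        _ = Real.exp (u xm) := by rw [← Finset.sum_mul, h1 xm, one_mul]
    have hge : Real.exp (u xn) ≤ Real.exp (u xn) * Real.exp t := by
      rw [← hkey xn]
      calc Real.exp (u xn) = ∑ y : X, w1 xn y * Real.exp (u xn) := by
            rw [← Finset.sum_mul, h1 xn, one_mul]
        _ ≤ ∑ y : X, w1 xn y * Real.exp (u y) := by
            refine Finset.sum_le_sum fun y _ => ?_
            exact mul_le_mul_of_nonneg_left
              (Real.exp_le_exp.mpr (hmin y (Finset.mem_univ y))) (hnn xn y)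
    have h1' : Real.exp t ≤ 1 := (mul_le_iff_le_one_right (Real.exp_pos (u xm))).mp hle
    have h2' : 1 ≤ Real.exp t := (le_mul_iff_one_le_right (Real.exp_pos (u xn))).mp hge
    have h3 : Real.exp t = Real.exp 0 := by rw [Real.exp_zero]; exact le_antisymm h1' h2'
    exact Real.exp_injective h3
  have hharm : ∀ x : X, ∑ y : X, w1 x y * Real.exp (u y) = Real.exp (u x) := by
    intro x; rw [hkey x, ht0, Real.exp_zero, mul_one]
  have hconst := harmonic_const hE hpos hnn h1 hharm
  have huconst : ∀ x : X, u x = 0 := by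
    intro x
    have h3 : Real.exp (u x) = Real.exp (u x0) := hconst x x0
    have h4 : u x = u x0 := Real.exp_injective h3
    have h5 : u x0 = 0 := by simp [hu, h0]
    rw [h4, h5]
  constructor
  · have := huconst (Classical.arbitrary X)
    simp only [ht] at ht0; linarith
  · funext x
    have := huconst x
    simp only [hu] at this; linarith

section AuxDefs

variable {X : Type*} [Fintype X] {K : ℕ}

set_option linter.unusedSectionVars false
set_option linter.unusedVariables false

noncomputable def evV (y : X) : ((Fin K → ℝ) × ((X → ℝ) × ℝ)) →L[ℝ] ℝ :=
  (ContinuousLinearMap.proj y).comp ((ContinuousLinearMap.fst ℝ (X → ℝ) ℝ).comp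
    (ContinuousLinearMap.snd ℝ (Fin K → ℝ) ((X → ℝ) × ℝ)))

noncomputable def evS : ((Fin K → ℝ) × ((X → ℝ) × ℝ)) →L[ℝ] ℝ :=
  (ContinuousLinearMap.snd ℝ (X → ℝ) ℝ).comp
    (ContinuousLinearMap.snd ℝ (Fin K → ℝ) ((X → ℝ) × ℝ))

noncomputable def evT (k : Fin K) : ((Fin K → ℝ) × ((X → ℝ) × ℝ)) →L[ℝ] ℝ :=
  (ContinuousLinearMap.proj k).comp (ContinuousLinearMap.fst ℝ (Fin K → ℝ) ((X → ℝ) × ℝ))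

noncomputable def auxL (F : Fin K → X → X → ℝ) (x y : X) :
    ((Fin K → ℝ) × ((X → ℝ) × ℝ)) →L[ℝ] ℝ :=
  (∑ k : Fin K, F k x y • evT k) + evV y - evV x - evS

@[simp] lemma auxL_apply (F : Fin K → X → X → ℝ) (x y : X)
    (d : (Fin K → ℝ) × ((X → ℝ) × ℝ)) :
    auxL F x y d = (∑ k : Fin K, F k x y * d.1 k) + d.2.1 y - d.2.1 x - d.2.2 := by
  simp [auxL, evV, evS, evT, ContinuousLinearMap.sum_apply]

noncomputable def Gfun (E : Set (X × X)) (C : X → X → ℝ) (F : Fin K → X → X → ℝ)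
    (q : (Fin K → ℝ) × ((X → ℝ) × ℝ)) : X → ℝ := fun x =>
  (∑ y : X, if (x, y) ∈ E then
    Real.exp (C x y + (∑ k : Fin K, q.1 k * F k x y) + q.2.1 y - q.2.1 x - q.2.2) else 0) - 1

noncomputable def Hfun (E : Set (X × X)) (C : X → X → ℝ) (F : Fin K → X → X → ℝ) (x0 : X)
    (q : (Fin K → ℝ) × ((X → ℝ) × ℝ)) : (Fin K → ℝ) × ((X → ℝ) × ℝ) :=
  (q.1, (Gfun E C F q, q.2.1 x0))

noncomputable def Dfull (E : Set (X × X)) (C : X → X → ℝ) (F : Fin K → X → X → ℝ) (x0 : X)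
    (W : X → X → ℝ) : ((Fin K → ℝ) × ((X → ℝ) × ℝ)) →L[ℝ] ((Fin K → ℝ) × ((X → ℝ) × ℝ)) :=
  (ContinuousLinearMap.fst ℝ (Fin K → ℝ) ((X → ℝ) × ℝ)).prod
    ((ContinuousLinearMap.pi (fun x => ∑ y : X, W x y • auxL F x y)).prod (evV x0))

lemma hasStrict_Hfun (E : Set (X × X)) (C : X → X → ℝ) (F : Fin K → X → X → ℝ) (x0 : X)
    (q0 : (Fin K → ℝ) × ((X → ℝ) × ℝ)) (W : X → X → ℝ)
    (hW : ∀ x y : X, W x y = if (x, y) ∈ E then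
      Real.exp (C x y + (∑ k : Fin K, q0.1 k * F k x y) + q0.2.1 y - q0.2.1 x - q0.2.2) else 0) :
    HasStrictFDerivAt (Hfun E C F x0) (Dfull E C F x0 W) q0 := by
  apply HasStrictFDerivAt.prodMk
  · exact hasStrictFDerivAt_fst
  apply HasStrictFDerivAt.prodMk
  · apply hasStrictFDerivAt_pi''
    intro x
    rw [ContinuousLinearMap.proj_pi]
    have hterm : ∀ y : X, HasStrictFDerivAt
        (fun q : (Fin K → ℝ) × ((X → ℝ) × ℝ) => if (x, y) ∈ E then
          Real.exp (C x y + (∑ k : Fin K, q.1 k * F k x y) + q.2.1 y - q.2.1 x - q.2.2) else 0)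
        (W x y • auxL F x y) q0 := by
      intro y
      by_cases h : (x, y) ∈ E
      · simp only [if_pos h]
        have haff : HasStrictFDerivAt
            (fun q : (Fin K → ℝ) × ((X → ℝ) × ℝ) =>
              C x y + (∑ k : Fin K, q.1 k * F k x y) + q.2.1 y - q.2.1 x - q.2.2)
            (auxL F x y) q0 := by
          have heq : (fun q : (Fin K → ℝ) × ((X → ℝ) × ℝ) =>
              C x y + (∑ k : Fin K, q.1 k * F k x y) + q.2.1 y - q.2.1 x - q.2.2)
              = fun q => C x y + auxL F x y q := by
            funext q
            rw [auxL_apply]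
            rw [Finset.sum_congr rfl fun k _ => mul_comm (q.1 k) (F k x y)]
            ring
          rw [heq]
          simpa using (hasStrictFDerivAt_const (C x y) q0).fun_add ((auxL F x y).hasStrictFDerivAt)
        have := haff.exp
        rwa [show Real.exp (C x y + (∑ k : Fin K, q0.1 k * F k x y)
            + q0.2.1 y - q0.2.1 x - q0.2.2) = W x y by rw [hW x y, if_pos h]] at this
      · simp only [if_neg h]
        rw [show W x y = 0 by rw [hW x y, if_neg h], zero_smul]
        exact hasStrictFDerivAt_const 0 q0
    have := HasStrictFDerivAt.fun_sum (u := Finset.univ) fun y _ => hterm y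
    exact this.sub_const 1
  · exact (evV x0).hasStrictFDerivAt

end AuxDefs

/-- the potential is differentiable and its partial derivatives are
the stationary expectations of the F_k. -/
theorem stmt_4 {X : Type*} [Fintype X] [Nonempty X] (E : Set (X × X))
    (hE : StronglyConnected E) (K : ℕ)
    (C : X → X → ℝ) (F : Fin K → X → X → ℝ)
    (ψ : (Fin K → ℝ) → ℝ) (κ : (Fin K → ℝ) → X → ℝ)
    (w : (Fin K → ℝ) → X → X → ℝ)
    (hw : ∀ (θ : Fin K → ℝ) (x y : X), w θ x y = if (x, y) ∈ E then
        Real.exp (C x y + ∑ k : Fin K, θ k * F k x y + κ θ y - κ θ x - ψ θ) else 0)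
    (hker : ∀ θ : Fin K → ℝ, IsMarkovKernel (w θ)) :
    ∀ θ : Fin K → ℝ, DifferentiableAt ℝ ψ θ ∧
      ∀ k : Fin K, fderiv ℝ ψ θ (Pi.single k 1) =
        ∑ x : X, ∑ y : X,
          if (x, y) ∈ E then statDist (w θ) x * w θ x y * F k x y else 0 := by
  intro θ0
  have x0 : X := Classical.arbitrary X
  have hWnn : ∀ x y : X, 0 ≤ w θ0 x y := (hker θ0).1
  have hWsum : ∀ x : X, ∑ y : X, w θ0 x y = 1 := (hker θ0).2
  have hWzero : ∀ x y : X, (x, y) ∉ E → w θ0 x y = 0 := by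
    intro x y h; rw [hw, if_neg h]
  have hWpos : ∀ x y : X, 0 < w θ0 x y ↔ (x, y) ∈ E := by
    intro x y; rw [hw]
    by_cases h : (x, y) ∈ E <;> simp [h, Real.exp_pos]
  -- stationary distribution
  have hstat : ∃ p : X → ℝ, IsStationaryDist (w θ0) p := stat_exists hWnn hWsum
  set p : X → ℝ := statDist (w θ0) with hpdef
  have hps : IsStationaryDist (w θ0) p := by
    rw [hpdef]; unfold statDist; rw [dif_pos hstat]; exact hstat.choose_spec
  obtain ⟨hp0, hp1, hp2⟩ := hps
  -- row sums in normalized form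
  have hrow : ∀ (θ : Fin K → ℝ) (x : X), ∑ y : X, (if (x, y) ∈ E then
      Real.exp (C x y + (∑ k : Fin K, θ k * F k x y) + (κ θ y - κ θ x0)
        - (κ θ x - κ θ x0) - ψ θ) else 0) = 1 := by
    intro θ x
    rw [← (hker θ).2 x]
    refine Finset.sum_congr rfl fun y _ => ?_
    rw [hw]
    by_cases h : (x, y) ∈ E
    · simp only [if_pos h]; congr 1; ring
    · simp [h]
  -- the base point
  set q0 : (Fin K → ℝ) × ((X → ℝ) × ℝ) :=
    (θ0, (fun z => κ θ0 z - κ θ0 x0, ψ θ0)) with hq0def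
  have hWq0 : ∀ x y : X, w θ0 x y = if (x, y) ∈ E then
      Real.exp (C x y + (∑ k : Fin K, q0.1 k * F k x y) + q0.2.1 y - q0.2.1 x - q0.2.2)
      else 0 := by
    intro x y
    rw [hw]
    by_cases h : (x, y) ∈ E
    · simp only [if_pos h, hq0def]; congr 1; ring
    · simp [h]
  have hHd : HasStrictFDerivAt (Hfun E C F x0) (Dfull E C F x0 (w θ0)) q0 :=
    hasStrict_Hfun E C F x0 q0 (w θ0) hWq0
  -- injectivity of the derivative
  have hinj : Function.Injective (Dfull E C F x0 (w θ0)) := by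
    suffices h : ∀ d : (Fin K → ℝ) × ((X → ℝ) × ℝ), Dfull E C F x0 (w θ0) d = 0 → d = 0 by
      intro d e hde
      have h2 : Dfull E C F x0 (w θ0) (d - e) = 0 := by rw [map_sub, hde, sub_self]
      have := h _ h2; rwa [sub_eq_zero] at this
    intro d hd
    have h1 : d.1 = 0 := congrArg Prod.fst hd
    have h2 := congrArg Prod.snd hd
    have h2a : (fun x => (∑ y : X, w θ0 x y • auxL F x y) d) = (0 : X → ℝ) :=
      congrArg Prod.fst h2
    have h2b : d.2.1 x0 = 0 := congrArg Prod.snd h2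
    have heq : ∀ x : X, ∑ y : X, w θ0 x y * (d.2.1 y - d.2.1 x - d.2.2) = 0 := by
      intro x
      have h3 := congrFun h2a x
      simp only [ContinuousLinearMap.sum_apply, ContinuousLinearMap.smul_apply,
        auxL_apply, smul_eq_mul, Pi.zero_apply] at h3
      rw [← h3]
      refine Finset.sum_congr rfl fun y _ => ?_
      rw [h1]
      simp
    have heq2 : ∀ x : X, ∑ y : X, w θ0 x y * d.2.1 y = d.2.1 x + d.2.2 := by
      intro x
      have h3 : ∑ y : X, w θ0 x y * (d.2.1 y - d.2.1 x - d.2.2)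
          = (∑ y : X, w θ0 x y * d.2.1 y) - (∑ y : X, w θ0 x y) * (d.2.1 x + d.2.2) := by
        rw [Finset.sum_mul, ← Finset.sum_sub_distrib]
        exact Finset.sum_congr rfl fun y _ => by ring
      have h4 := heq x
      rw [h3, hWsum x, one_mul] at h4
      linarith
    have hs0 : d.2.2 = 0 := by
      have h5 : ∑ x : X, p x * (∑ y : X, w θ0 x y * d.2.1 y)
          = ∑ x : X, p x * (d.2.1 x + d.2.2) :=
        Finset.sum_congr rfl fun x _ => by rw [heq2 x]
      have h6 : ∑ x : X, p x * (∑ y : X, w θ0 x y * d.2.1 y) = ∑ y : X, p y * d.2.1 y := by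
        calc ∑ x : X, p x * (∑ y : X, w θ0 x y * d.2.1 y)
            = ∑ x : X, ∑ y : X, p x * w θ0 x y * d.2.1 y := by
              refine Finset.sum_congr rfl fun x _ => ?_
              rw [Finset.mul_sum]
              exact Finset.sum_congr rfl fun y _ => by ring
          _ = ∑ y : X, ∑ x : X, p x * w θ0 x y * d.2.1 y := Finset.sum_comm
          _ = ∑ y : X, (∑ x : X, p x * w θ0 x y) * d.2.1 y := by
              refine Finset.sum_congr rfl fun y _ => ?_
              rw [Finset.sum_mul]
          _ = ∑ y : X, p y * d.2.1 y :=
              Finset.sum_congr rfl fun y _ => by rw [hp2 y]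
      have h7 : ∑ x : X, p x * (d.2.1 x + d.2.2)
          = (∑ x : X, p x * d.2.1 x) + d.2.2 := by
        calc ∑ x : X, p x * (d.2.1 x + d.2.2)
            = ∑ x : X, (p x * d.2.1 x + p x * d.2.2) :=
              Finset.sum_congr rfl fun x _ => by ring
          _ = (∑ x : X, p x * d.2.1 x) + (∑ x : X, p x) * d.2.2 := by
              rw [Finset.sum_add_distrib, Finset.sum_mul]
          _ = (∑ x : X, p x * d.2.1 x) + d.2.2 := by rw [hp1, one_mul]
      rw [h5, h7] at h6
      linarith
    have hharm : ∀ x : X, ∑ y : X, w θ0 x y * d.2.1 y = d.2.1 x := by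
      intro x; rw [heq2 x, hs0, add_zero]
    have hconst := harmonic_const hE hWpos hWnn hWsum hharm
    have hv0 : d.2.1 = 0 := funext fun x => by
      rw [show d.2.1 x = d.2.1 x0 from hconst x x0, h2b]; rfl
    have : d = (d.1, (d.2.1, d.2.2)) := rfl
    rw [this, h1, hv0, hs0]
    rfl
  -- build the equivalence
  have hinjL : Function.Injective ((Dfull E C F x0 (w θ0)).toLinearMap) := hinj
  have hsurjL : Function.Surjective ((Dfull E C F x0 (w θ0)).toLinearMap) :=
    LinearMap.injective_iff_surjective.mp hinjL
  set ec : ((Fin K → ℝ) × ((X → ℝ) × ℝ)) ≃L[ℝ] ((Fin K → ℝ) × ((X → ℝ) × ℝ)) :=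
    (LinearEquiv.ofBijective (Dfull E C F x0 (w θ0)).toLinearMap
      ⟨hinjL, hsurjL⟩).toContinuousLinearEquiv with hecdef
  have hec : (ec : ((Fin K → ℝ) × ((X → ℝ) × ℝ)) →L[ℝ] ((Fin K → ℝ) × ((X → ℝ) × ℝ)))
      = Dfull E C F x0 (w θ0) := by
    apply ContinuousLinearMap.ext; intro d; rfl
  have hHd' : HasStrictFDerivAt (Hfun E C F x0)
      (ec : ((Fin K → ℝ) × ((X → ℝ) × ℝ)) →L[ℝ] ((Fin K → ℝ) × ((X → ℝ) × ℝ))) q0 := by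
    rw [hec]; exact hHd
  have hright := hHd'.eventually_right_inverse
  have hlocinv := hHd'.to_localInverse
  set g := HasStrictFDerivAt.localInverse (Hfun E C F x0) ec q0 hHd' with hgdef
  have hq0img : Hfun E C F x0 q0 = (θ0, (0, 0)) := by
    have hG : Gfun E C F q0 = 0 := by
      funext x
      have h1 := hrow θ0 x
      simp only [Gfun, hq0def, Pi.zero_apply]
      rw [h1, sub_self]
    rw [Hfun, hG]; simp only [hq0def]
    norm_num
  rw [hq0img] at hright hlocinv
  -- pull back to a neighborhood of θ0
  have hι : Filter.Tendsto (fun θ : Fin K → ℝ => (θ, ((0 : X → ℝ), (0:ℝ)))) (nhds θ0)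
      (nhds (θ0, ((0 : X → ℝ), (0:ℝ)))) :=
    (continuous_id.prodMk continuous_const).tendsto θ0
  have hev0 : ∀ᶠ θ in nhds θ0,
      Hfun E C F x0 (g (θ, ((0 : X → ℝ), (0:ℝ)))) = (θ, ((0 : X → ℝ), (0:ℝ))) :=
    hι.eventually hright
  have hev : ∀ᶠ θ in nhds θ0,
      (fun z => κ θ z - κ θ x0) = (g (θ, ((0 : X → ℝ), (0:ℝ)))).2.1
        ∧ ψ θ = (g (θ, ((0 : X → ℝ), (0:ℝ)))).2.2 := by
    filter_upwards [hev0] with θ hθ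
    have h1 : (g (θ, ((0 : X → ℝ), (0:ℝ)))).1 = θ := congrArg Prod.fst hθ
    have h2 := congrArg Prod.snd hθ
    have h2a : Gfun E C F (g (θ, ((0 : X → ℝ), (0:ℝ)))) = 0 := congrArg Prod.fst h2
    have h2b : (g (θ, ((0 : X → ℝ), (0:ℝ)))).2.1 x0 = 0 := congrArg Prod.snd h2
    have hrow2 : ∀ x : X, ∑ y : X, (if (x, y) ∈ E then
        Real.exp ((C x y + ∑ k : Fin K, θ k * F k x y)
          + (g (θ, ((0 : X → ℝ), (0:ℝ)))).2.1 y - (g (θ, ((0 : X → ℝ), (0:ℝ)))).2.1 x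
          - (g (θ, ((0 : X → ℝ), (0:ℝ)))).2.2) else 0) = 1 := by
      intro x
      have h3 := congrFun h2a x
      simp only [Gfun, Pi.zero_apply, sub_eq_zero] at h3
      rw [h1] at h3
      exact h3
    have := eigen_unique hE (fun x y => C x y + ∑ k : Fin K, θ k * F k x y) x0
      (fun z => κ θ z - κ θ x0) ((g (θ, ((0 : X → ℝ), (0:ℝ)))).2.1)
      (ψ θ) ((g (θ, ((0 : X → ℝ), (0:ℝ)))).2.2)
      (fun x => hrow θ x) hrow2
      (by show κ θ x0 - κ θ x0 = _; rw [sub_self]; exact h2b.symm)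
    exact ⟨this.2, this.1⟩
  -- derivative of the implicit function
  have hj : HasFDerivAt (fun θ : Fin K → ℝ => (θ, ((0 : X → ℝ), (0 : ℝ))))
      ((ContinuousLinearMap.id ℝ (Fin K → ℝ)).prod 0) θ0 := by
    have hjfun : (fun θ : Fin K → ℝ => (θ, ((0 : X → ℝ), (0 : ℝ))))
        = ⇑((ContinuousLinearMap.id ℝ (Fin K → ℝ)).prod 0) := by
      funext θ
      simp [ContinuousLinearMap.prod_apply, Prod.ext_iff]
    rw [hjfun]
    exact ((ContinuousLinearMap.id ℝ (Fin K → ℝ)).prod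
      (0 : (Fin K → ℝ) →L[ℝ] ((X → ℝ) × ℝ))).hasFDerivAt
  set Dr : (Fin K → ℝ) →L[ℝ] ((Fin K → ℝ) × ((X → ℝ) × ℝ)) :=
    (ec.symm : ((Fin K → ℝ) × ((X → ℝ) × ℝ)) →L[ℝ] ((Fin K → ℝ) × ((X → ℝ) × ℝ))).comp
      ((ContinuousLinearMap.id ℝ (Fin K → ℝ)).prod 0) with hDr
  have hr : HasFDerivAt (fun θ : Fin K → ℝ => g (θ, ((0 : X → ℝ), (0:ℝ)))) Dr θ0 :=
    (hlocinv.hasFDerivAt).comp θ0 hj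
  set cV : ((Fin K → ℝ) × ((X → ℝ) × ℝ)) →L[ℝ] (X → ℝ) :=
    (ContinuousLinearMap.fst ℝ (X → ℝ) ℝ).comp
      (ContinuousLinearMap.snd ℝ (Fin K → ℝ) ((X → ℝ) × ℝ)) with hcV
  set cS : ((Fin K → ℝ) × ((X → ℝ) × ℝ)) →L[ℝ] ℝ :=
    (ContinuousLinearMap.snd ℝ (X → ℝ) ℝ).comp
      (ContinuousLinearMap.snd ℝ (Fin K → ℝ) ((X → ℝ) × ℝ)) with hcS
  set Lv : (Fin K → ℝ) →L[ℝ] (X → ℝ) := cV.comp Dr with hLv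
  set Lψ : (Fin K → ℝ) →L[ℝ] ℝ := cS.comp Dr with hLψ
  have hvf : HasFDerivAt (fun θ : Fin K → ℝ => (g (θ, ((0 : X → ℝ), (0:ℝ)))).2.1) Lv θ0 :=
    (cV.hasFDerivAt).comp θ0 hr
  have hsf : HasFDerivAt (fun θ : Fin K → ℝ => (g (θ, ((0 : X → ℝ), (0:ℝ)))).2.2) Lψ θ0 :=
    (cS.hasFDerivAt).comp θ0 hr
  have hψeq : ψ =ᶠ[nhds θ0] (fun θ : Fin K → ℝ => (g (θ, ((0 : X → ℝ), (0:ℝ)))).2.2) :=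
    hev.mono fun θ h => h.2
  have hψf : HasFDerivAt ψ Lψ θ0 := hsf.congr_of_eventuallyEq hψeq
  refine ⟨hψf.differentiableAt, ?_⟩
  intro k
  have hself := hev.self_of_nhds
  have hvf0 : (g (θ0, ((0 : X → ℝ), (0:ℝ)))).2.1 = fun z => κ θ0 z - κ θ0 x0 := hself.1.symm
  have hsf0 : (g (θ0, ((0 : X → ℝ), (0:ℝ)))).2.2 = ψ θ0 := hself.2.symm
  set ek : Fin K → ℝ := Pi.single k 1 with hek
  set a : X → ℝ := Lv ek with ha
  set b : ℝ := Lψ ek with hb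
  -- the key pointwise identity
  have heqx : ∀ x : X, ∑ y : X, w θ0 x y * (F k x y + a y - a x - b) = 0 := by
    intro x
    set Nxy : X → ((Fin K → ℝ) →L[ℝ] ℝ) := fun y =>
      ((∑ j : Fin K, F j x y • (ContinuousLinearMap.proj j : (Fin K → ℝ) →L[ℝ] ℝ))
        + (ContinuousLinearMap.proj y).comp Lv - (ContinuousLinearMap.proj x).comp Lv
        - Lψ) with hNxy
    have hterm : ∀ y : X, HasFDerivAt (fun θ : Fin K → ℝ => if (x, y) ∈ E then
        Real.exp (C x y + (∑ j : Fin K, θ j * F j x y)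
          + (g (θ, ((0 : X → ℝ), (0:ℝ)))).2.1 y - (g (θ, ((0 : X → ℝ), (0:ℝ)))).2.1 x
          - (g (θ, ((0 : X → ℝ), (0:ℝ)))).2.2) else 0)
        (w θ0 x y • Nxy y) θ0 := by
      intro y
      by_cases h : (x, y) ∈ E
      · simp only [if_pos h]
        have ht1 : HasFDerivAt (fun θ : Fin K → ℝ => ∑ j : Fin K, θ j * F j x y)
            (∑ j : Fin K, F j x y • (ContinuousLinearMap.proj j : (Fin K → ℝ) →L[ℝ] ℝ)) θ0 := by
          have heq2 : (fun θ : Fin K → ℝ => ∑ j : Fin K, θ j * F j x y)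
              = ⇑(∑ j : Fin K, F j x y • (ContinuousLinearMap.proj j : (Fin K → ℝ) →L[ℝ] ℝ)) := by
            funext θ
            simp [ContinuousLinearMap.sum_apply, mul_comm]
          rw [heq2]
          exact (∑ j : Fin K, F j x y •
            (ContinuousLinearMap.proj j : (Fin K → ℝ) →L[ℝ] ℝ)).hasFDerivAt
        have ht2 : HasFDerivAt (fun θ : Fin K → ℝ => (g (θ, ((0 : X → ℝ), (0:ℝ)))).2.1 y)
            ((ContinuousLinearMap.proj y).comp Lv) θ0 :=
          ((ContinuousLinearMap.proj y : (X → ℝ) →L[ℝ] ℝ).hasFDerivAt).comp θ0 hvf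
        have ht3 : HasFDerivAt (fun θ : Fin K → ℝ => (g (θ, ((0 : X → ℝ), (0:ℝ)))).2.1 x)
            ((ContinuousLinearMap.proj x).comp Lv) θ0 :=
          ((ContinuousLinearMap.proj x : (X → ℝ) →L[ℝ] ℝ).hasFDerivAt).comp θ0 hvf
        have hin : HasFDerivAt (fun θ : Fin K → ℝ => C x y + (∑ j : Fin K, θ j * F j x y)
            + (g (θ, ((0 : X → ℝ), (0:ℝ)))).2.1 y - (g (θ, ((0 : X → ℝ), (0:ℝ)))).2.1 x
            - (g (θ, ((0 : X → ℝ), (0:ℝ)))).2.2) (Nxy y) θ0 := by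
          have h4 := ((((hasFDerivAt_const (C x y) θ0).fun_add ht1).fun_add ht2).fun_sub ht3).fun_sub hsf
          rw [hNxy]
          simpa [zero_add] using h4
        have hexp := hin.exp
        have hval : Real.exp (C x y + (∑ j : Fin K, θ0 j * F j x y)
            + (g (θ0, ((0 : X → ℝ), (0:ℝ)))).2.1 y - (g (θ0, ((0 : X → ℝ), (0:ℝ)))).2.1 x
            - (g (θ0, ((0 : X → ℝ), (0:ℝ)))).2.2) = w θ0 x y := by
          simp only [hvf0, hsf0]
          rw [hw θ0 x y, if_pos h]
          congr 1
          ring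
        rwa [hval] at hexp
      · simp only [if_neg h]
        rw [show w θ0 x y = 0 from hWzero x y h, zero_smul]
        exact hasFDerivAt_const 0 θ0
    have hTx := HasFDerivAt.fun_sum (u := Finset.univ) fun y _ => hterm y
    have hT1 : (fun θ : Fin K → ℝ => ∑ y : X, if (x, y) ∈ E then
        Real.exp (C x y + (∑ j : Fin K, θ j * F j x y)
          + (g (θ, ((0 : X → ℝ), (0:ℝ)))).2.1 y - (g (θ, ((0 : X → ℝ), (0:ℝ)))).2.1 x
          - (g (θ, ((0 : X → ℝ), (0:ℝ)))).2.2) else 0)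
        =ᶠ[nhds θ0] (fun _ => (1:ℝ)) := by
      filter_upwards [hev] with θ hθ
      rw [← (hker θ).2 x]
      refine Finset.sum_congr rfl fun y _ => ?_
      rw [hw]
      by_cases h : (x, y) ∈ E
      · simp only [if_pos h]
        congr 1
        rw [← congrFun hθ.1 y, ← congrFun hθ.1 x, ← hθ.2]
        ring
      · simp [h]
    have hzero : HasFDerivAt (fun θ : Fin K → ℝ => ∑ y : X, if (x, y) ∈ E then
        Real.exp (C x y + (∑ j : Fin K, θ j * F j x y)
          + (g (θ, ((0 : X → ℝ), (0:ℝ)))).2.1 y - (g (θ, ((0 : X → ℝ), (0:ℝ)))).2.1 x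
          - (g (θ, ((0 : X → ℝ), (0:ℝ)))).2.2) else 0)
        (0 : (Fin K → ℝ) →L[ℝ] ℝ) θ0 :=
      (hasFDerivAt_const (1:ℝ) θ0).congr_of_eventuallyEq hT1
    have hM0 : (∑ y : X, w θ0 x y • Nxy y) = 0 := hTx.unique hzero
    have h5 := congrArg (fun (L : (Fin K → ℝ) →L[ℝ] ℝ) => L ek) hM0
    simp only [ContinuousLinearMap.sum_apply, ContinuousLinearMap.smul_apply, smul_eq_mul,
      ContinuousLinearMap.zero_apply, hNxy, ContinuousLinearMap.add_apply,
      ContinuousLinearMap.sub_apply, ContinuousLinearMap.coe_comp', Function.comp_apply,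
      ContinuousLinearMap.proj_apply, hek, Pi.single_apply, mul_ite, mul_one, mul_zero,
      Finset.sum_ite_eq', Finset.mem_univ, if_true] at h5
    rw [← h5]
  -- sum against the stationary distribution
  have heq2 : ∀ x : X, (∑ y : X, w θ0 x y * F k x y) + (∑ y : X, w θ0 x y * a y)
      = a x + b := by
    intro x
    have h3 : ∑ y : X, w θ0 x y * (F k x y + a y - a x - b)
        = (∑ y : X, w θ0 x y * F k x y) + (∑ y : X, w θ0 x y * a y)
          - (∑ y : X, w θ0 x y) * (a x + b) := by
      rw [Finset.sum_mul, ← Finset.sum_add_distrib, ← Finset.sum_sub_distrib]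
      exact Finset.sum_congr rfl fun y _ => by ring
    have h4 := heqx x
    rw [h3, hWsum x, one_mul] at h4
    linarith
  have hmul : ∑ x : X, p x * ((∑ y : X, w θ0 x y * F k x y) + (∑ y : X, w θ0 x y * a y))
      = ∑ x : X, p x * (a x + b) := Finset.sum_congr rfl fun x _ => by rw [heq2 x]
  have hA : ∑ x : X, p x * (∑ y : X, w θ0 x y * a y) = ∑ x : X, p x * a x := by
    calc ∑ x : X, p x * (∑ y : X, w θ0 x y * a y)
        = ∑ x : X, ∑ y : X, p x * w θ0 x y * a y := by
          refine Finset.sum_congr rfl fun x _ => ?_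
          rw [Finset.mul_sum]; exact Finset.sum_congr rfl fun y _ => by ring
      _ = ∑ y : X, ∑ x : X, p x * w θ0 x y * a y := Finset.sum_comm
      _ = ∑ y : X, (∑ x : X, p x * w θ0 x y) * a y := by
          refine Finset.sum_congr rfl fun y _ => ?_; rw [Finset.sum_mul]
      _ = ∑ y : X, p y * a y := Finset.sum_congr rfl fun y _ => by rw [hp2 y]
  have h7 : ∑ x : X, p x * (a x + b) = (∑ x : X, p x * a x) + b := by
    calc ∑ x : X, p x * (a x + b) = ∑ x : X, (p x * a x + p x * b) :=
          Finset.sum_congr rfl fun x _ => by ring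
      _ = (∑ x : X, p x * a x) + (∑ x : X, p x) * b := by
          rw [Finset.sum_add_distrib, Finset.sum_mul]
      _ = (∑ x : X, p x * a x) + b := by rw [hp1, one_mul]
  have h8 : ∑ x : X, p x * ((∑ y : X, w θ0 x y * F k x y) + (∑ y : X, w θ0 x y * a y))
      = (∑ x : X, p x * (∑ y : X, w θ0 x y * F k x y))
        + (∑ x : X, p x * (∑ y : X, w θ0 x y * a y)) := by
    rw [← Finset.sum_add_distrib]
    exact Finset.sum_congr rfl fun x _ => by ring
  have hbval : b = ∑ x : X, p x * (∑ y : X, w θ0 x y * F k x y) := by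
    rw [h8, hA, h7] at hmul
    linarith
  have hfd : fderiv ℝ ψ θ0 = Lψ := hψf.fderiv
  rw [hfd]
  show Lψ (Pi.single k 1) = _
  rw [← hek, ← hb, hbval]
  refine Finset.sum_congr rfl fun x _ => ?_
  rw [Finset.mul_sum]
  refine Finset.sum_congr rfl fun y _ => ?_
  by_cases h : (x, y) ∈ E
  · rw [if_pos h]; ring
  · rw [if_neg h, hWzero x y h]; ring
end

section
/- Let X be a finite nonempty set, E ⊆ X × X strongly connected, and fix v_0 ∈ W(X,E). Let p_0 be a point of the relative boundary of P_s, i.e., p_0 lies in the closure cl(P_s) and the support of p_0 is a proper subset of E, and let p_1 ∈ P_s. For t ∈ (0,1) set p_t = (1−t)p_0 + t p_1. Then the derivative (d/dt)G(p_t) = Σ_{(x,y)∈E} (p_1(x,y) − p_0(x,y)) log(p_t(y|x)/v_0(y|x)) tends to −∞ as t → 0⁺. -/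
open scoped Classical
open Finset

private lemma sum_atBot {ι α : Type*} {l : Filter α} {s : Finset ι}
    (hs : s.Nonempty) {f : ι → α → ℝ}
    (h : ∀ i ∈ s, Filter.Tendsto (f i) l Filter.atBot) :
    Filter.Tendsto (fun t => ∑ i ∈ s, f i t) l Filter.atBot := by
  induction hs using Finset.Nonempty.cons_induction with
  | singleton a => simpa using h a (by simp)
  | cons a s ha hs ih =>
    simp only [Finset.sum_cons]
    exact Filter.Tendsto.atBot_add_atBot (h a (by simp)) (ih fun i hi => h i (Finset.mem_cons_of_mem hi))

/-- steepness of G at the relative boundary of P_s. -/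
theorem stmt_5 {X : Type*} [Fintype X] [Nonempty X] (E : Set (X × X))
    (hE : StronglyConnected E) (v0 : X → X → ℝ) (hv0 : MemW E v0)
    (p0 p1 : X → X → ℝ)
    (hp0nonneg : ∀ x y : X, 0 ≤ p0 x y)
    (hp0sum : ∑ x : X, ∑ y : X, p0 x y = 1)
    (hp0supp : ∀ x y : X, 0 < p0 x y → (x, y) ∈ E)
    (hp0proper : ∃ q ∈ E, p0 q.1 q.2 = 0)
    (hp0marg : ∀ x : X, ∑ y : X, p0 x y = ∑ y : X, p0 y x)
    (hp1supp : ∀ x y : X, 0 < p1 x y ↔ (x, y) ∈ E)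
    (hp1sum : ∑ x : X, ∑ y : X, p1 x y = 1)
    (hp1marg : ∀ x : X, ∑ y : X, p1 x y = ∑ y : X, p1 y x) :
    Filter.Tendsto
      (fun t : ℝ => ∑ x : X, ∑ y : X,
        if (x, y) ∈ E then
          (p1 x y - p0 x y) *
            Real.log ((((1 - t) * p0 x y + t * p1 x y) /
              (∑ y' : X, ((1 - t) * p0 x y' + t * p1 x y'))) / v0 x y)
        else 0)
      (nhdsWithin 0 (Set.Ioi 0)) Filter.atBot := by
  classical
  have hv0pos : ∀ x y : X, (x, y) ∈ E → 0 < v0 x y := fun x y h => (hv0.2 x y).2 h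
  have hp1pos : ∀ x y : X, (x, y) ∈ E → 0 < p1 x y := fun x y h => (hp1supp x y).2 h
  -- special edge: p0 vanishes on it but its row has positive mass
  obtain ⟨a, b, hab, hab0, habr⟩ :
      ∃ a b : X, (a, b) ∈ E ∧ p0 a b = 0 ∧ 0 < ∑ y, p0 a y := by
    by_contra hcon
    push_neg at hcon
    have hstep : ∀ x y : X, (x, y) ∈ E → 0 < ∑ y', p0 x y' → 0 < ∑ y', p0 y y' := by
      intro x y hxy hx
      have hpos : 0 < p0 x y := by
        rcases (hp0nonneg x y).lt_or_eq with h | h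
        · exact h
        · exact absurd hx (not_lt.mpr (hcon x y hxy h.symm))
      calc (0:ℝ) < p0 x y := hpos
        _ ≤ ∑ z, p0 z y := Finset.single_le_sum (fun z _ => hp0nonneg z y) (Finset.mem_univ x)
        _ = ∑ z, p0 y z := (hp0marg y).symm
    obtain ⟨x0, hx0⟩ : ∃ x0 : X, 0 < ∑ y, p0 x0 y := by
      by_contra hno
      push_neg at hno
      have : ∑ x : X, ∑ y : X, p0 x y ≤ 0 := Finset.sum_nonpos fun x _ => hno x
      linarith [hp0sum]
    have hprop : ∀ z : X, Relation.ReflTransGen (fun a b => (a, b) ∈ E) x0 z →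
        0 < ∑ y, p0 z y := by
      intro z hz
      induction hz with
      | refl => exact hx0
      | tail _ hbc ih => exact hstep _ _ hbc ih
    obtain ⟨q, hqE, hq0⟩ := hp0proper
    have hq1 : 0 < ∑ y, p0 q.1 y := hprop q.1 (hE x0 q.1)
    have : 0 < p0 q.1 q.2 := by
      rcases (hp0nonneg q.1 q.2).lt_or_eq with h | h
      · exact h
      · exact absurd hq1 (not_lt.mpr (hcon q.1 q.2 hqE h.symm))
    exact this.ne' hq0
  -- notation
  set pt : ℝ → X → X → ℝ := fun t x y => (1 - t) * p0 x y + t * p1 x y with hptdef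
  set rs : ℝ → X → ℝ := fun t x => ∑ y', pt t x y' with hrsdef
  set term : ℝ → X × X → ℝ := fun t q =>
    if (q.1, q.2) ∈ E then
      (p1 q.1 q.2 - p0 q.1 q.2) * Real.log ((pt t q.1 q.2 / rs t q.1) / v0 q.1 q.2)
    else 0 with htermdef
  set B1 : X × X → Prop := fun q => (q.1, q.2) ∈ E ∧ p0 q.1 q.2 = 0 ∧ 0 < ∑ y, p0 q.1 y
    with hB1def
  -- basic continuity facts
  have hptc : ∀ x y : X, Filter.Tendsto (fun t => pt t x y) (nhds 0) (nhds (p0 x y)) := by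
    intro x y
    have : Continuous fun t : ℝ => (1 - t) * p0 x y + t * p1 x y := by continuity
    simpa using this.tendsto 0
  have hrsc : ∀ x : X, Filter.Tendsto (fun t => rs t x) (nhds 0) (nhds (∑ y, p0 x y)) :=
    fun x => tendsto_finset_sum _ fun y _ => hptc x y
  -- the non-B1 terms converge
  have hnotB1 : ∀ q ∈ Finset.univ.filter (fun q => ¬ B1 q),
      ∃ L : ℝ, Filter.Tendsto (fun t => term t q)
        (nhdsWithin 0 (Set.Ioi 0)) (nhds L) := by
    intro q hq
    obtain ⟨x, y⟩ := q
    simp only [Finset.mem_filter, Finset.mem_univ, true_and, hB1def] at hq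
    by_cases hxy : (x, y) ∈ E
    · by_cases h0 : 0 < p0 x y
      · -- interior edge: continuity
        have hrow : 0 < ∑ y', p0 x y' :=
          lt_of_lt_of_le h0 (Finset.single_le_sum (fun z _ => hp0nonneg x z) (Finset.mem_univ y))
        refine ⟨(p1 x y - p0 x y) * Real.log ((p0 x y / ∑ y', p0 x y') / v0 x y), ?_⟩
        have h1 : Filter.Tendsto (fun t => (pt t x y / rs t x) / v0 x y) (nhds 0)
            (nhds ((p0 x y / ∑ y', p0 x y') / v0 x y)) :=
          ((hptc x y).div (hrsc x) hrow.ne').div tendsto_const_nhds (hv0pos x y hxy).ne'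
        have harg : ((p0 x y / ∑ y', p0 x y') / v0 x y) ≠ 0 :=
          (div_pos (div_pos h0 hrow) (hv0pos x y hxy)).ne'
        have h2 := (h1.log harg).const_mul (p1 x y - p0 x y)
        refine tendsto_nhdsWithin_of_tendsto_nhds (h2.congr fun t => ?_)
        simp [htermdef, hxy]
      · -- p0 x y = 0; since ¬B1, the whole row of p0 is zero, and the term is
        -- eventually constant (t cancels)
        have h0' : p0 x y = 0 := le_antisymm (not_lt.1 h0) (hp0nonneg x y)
        have hrow0 : ∑ y', p0 x y' = 0 := by
          by_contra hne
          have : 0 < ∑ y', p0 x y' :=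
            lt_of_le_of_ne (Finset.sum_nonneg fun z _ => hp0nonneg x z) (Ne.symm hne)
          exact hq ⟨hxy, h0', this⟩
        have hrow0' : ∀ y', p0 x y' = 0 := fun y' =>
          (Finset.sum_eq_zero_iff_of_nonneg (fun z _ => hp0nonneg x z)).1 hrow0 y'
            (Finset.mem_univ y')
        refine ⟨(p1 x y - p0 x y) * Real.log ((p1 x y / ∑ y', p1 x y') / v0 x y), ?_⟩
        have heq : ∀ᶠ t in nhdsWithin (0:ℝ) (Set.Ioi 0),
            ((p1 x y - p0 x y) * Real.log ((p1 x y / ∑ y', p1 x y') / v0 x y) : ℝ) =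
            term t (x, y) := by
          filter_upwards [self_mem_nhdsWithin] with t ht
          have ht0 : (t:ℝ) ≠ 0 := ne_of_gt ht
          have h1 : pt t x y = t * p1 x y := by simp [hptdef, hrow0' y]
          have h2 : rs t x = t * ∑ y', p1 x y' := by
            simp only [hrsdef, hptdef, hrow0', mul_zero, zero_add]
            rw [← Finset.mul_sum]
          simp only [htermdef, hxy, if_true, h1, h2]
          rw [mul_div_mul_left _ _ ht0]
        exact tendsto_const_nhds.congr' heq
    · exact ⟨0, by simp [htermdef, hxy]⟩
  -- the B1 terms tend to -∞
  have hB1tend : ∀ q ∈ Finset.univ.filter B1,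
      Filter.Tendsto (fun t => term t q) (nhdsWithin 0 (Set.Ioi 0)) Filter.atBot := by
    intro q hq
    obtain ⟨x, y⟩ := q
    simp only [Finset.mem_filter, Finset.mem_univ, true_and, hB1def] at hq
    obtain ⟨hxy, h0, hrow⟩ := hq
    have harg : Filter.Tendsto (fun t => (pt t x y / rs t x) / v0 x y)
        (nhdsWithin 0 (Set.Ioi 0)) (nhds 0) := by
      have h1 : Filter.Tendsto (fun t => (pt t x y / rs t x) / v0 x y) (nhds 0)
          (nhds ((p0 x y / ∑ y', p0 x y') / v0 x y)) :=
        ((hptc x y).div (hrsc x) hrow.ne').div tendsto_const_nhds (hv0pos x y hxy).ne'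
      have h2 : ((p0 x y / ∑ y', p0 x y') / v0 x y) = 0 := by simp [h0]
      rw [h2] at h1
      exact tendsto_nhdsWithin_of_tendsto_nhds h1
    have hrsev : ∀ᶠ t in nhdsWithin (0:ℝ) (Set.Ioi 0), 0 < rs t x :=
      ((hrsc x).eventually (eventually_gt_nhds hrow)).filter_mono nhdsWithin_le_nhds
    have hne : ∀ᶠ t in nhdsWithin (0:ℝ) (Set.Ioi 0),
        (pt t x y / rs t x) / v0 x y ∈ ({0}ᶜ : Set ℝ) := by
      filter_upwards [self_mem_nhdsWithin, hrsev] with t ht hrst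
      have hptpos : 0 < pt t x y := by
        have : pt t x y = t * p1 x y := by simp [hptdef, h0]
        rw [this]; exact mul_pos ht (hp1pos x y hxy)
      exact (div_pos (div_pos hptpos hrst) (hv0pos x y hxy)).ne'
    have hlog : Filter.Tendsto (fun t => Real.log ((pt t x y / rs t x) / v0 x y))
        (nhdsWithin 0 (Set.Ioi 0)) Filter.atBot :=
      Real.tendsto_log_nhdsNE_zero.comp (tendsto_nhdsWithin_iff.2 ⟨harg, hne⟩)
    have hc : 0 < p1 x y - p0 x y := by rw [h0, sub_zero]; exact hp1pos x y hxy
    refine (hlog.const_mul_atBot hc).congr fun t => ?_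
    simp [htermdef, hxy]
  -- combine
  obtain ⟨L, hL⟩ : ∃ L : X × X → ℝ, ∀ q ∈ Finset.univ.filter (fun q => ¬ B1 q),
      Filter.Tendsto (fun t => term t q) (nhdsWithin 0 (Set.Ioi 0)) (nhds (L q)) := by
    choose! L hL using hnotB1
    exact ⟨L, hL⟩
  have hgood : Filter.Tendsto
      (fun t => ∑ q ∈ Finset.univ.filter (fun q => ¬ B1 q), term t q)
      (nhdsWithin 0 (Set.Ioi 0)) (nhds (∑ q ∈ Finset.univ.filter (fun q => ¬ B1 q), L q)) :=
    tendsto_finset_sum _ fun q hq => hL q hq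
  have hbadne : (Finset.univ.filter B1).Nonempty :=
    ⟨(a, b), by simp [hB1def, hab, hab0, habr]⟩
  have hbad : Filter.Tendsto
      (fun t => ∑ q ∈ Finset.univ.filter B1, term t q)
      (nhdsWithin 0 (Set.Ioi 0)) Filter.atBot :=
    sum_atBot hbadne hB1tend
  refine (hbad.atBot_add hgood).congr fun t => ?_
  rw [Finset.sum_filter_add_sum_filter_not Finset.univ B1 (term t)]
  rw [show (∑ q : X × X, term t q) = ∑ x : X, ∑ y : X, term t (x, y) from
    Fintype.sum_prod_type _]
end

section
/- Let X be a finite nonempty set, E ⊆ X × X strongly connected, and C, F_1, …, F_K : E → ℝ with F_1, …, F_K linearly independent modulo N. Let ψ : ℝ^K → ℝ and κ : ℝ^K → (X → ℝ) be functions such that for every θ ∈ ℝ^K, w_θ(y|x) = exp(C(x,y) + Σ_k θ_k F_k(x,y) + κ_θ(y) − κ_θ(x) − ψ(θ)) for (x,y) ∈ E (and 0 off E) is a Markov kernel on X. Then ψ is strictly convex on ℝ^K. -/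
open scoped Classical
open Finset

/-- Strict weighted AM-GM for two positive reals. -/
lemma amgm_strict {a b p q : ℝ} (ha : 0 < a) (hb : 0 < b) (hab : a + b = 1)
    (hp : 0 < p) (hq : 0 < q) (hpq : p ≠ q) : p ^ a * q ^ b < a * p + b * q := by
  have hlog : Real.log p ≠ Real.log q := fun h => hpq (by
    have := congrArg Real.exp h
    rwa [Real.exp_log hp, Real.exp_log hq] at this)
  have hmain := strictConvexOn_exp.2 (Set.mem_univ (Real.log p)) (Set.mem_univ (Real.log q))
    hlog ha hb hab
  simp only [smul_eq_mul, Real.exp_log hp, Real.exp_log hq] at hmain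
  have h1 : p ^ a * q ^ b = Real.exp (a * Real.log p + b * Real.log q) := by
    rw [Real.rpow_def_of_pos hp, Real.rpow_def_of_pos hq, ← Real.exp_add]; ring_nf
  rw [h1]; exact hmain

/-- the potential is strictly convex. -/
theorem stmt_6 {X : Type*} [Fintype X] [Nonempty X] (E : Set (X × X))
    (hE : StronglyConnected E) (K : ℕ)
    (C : X → X → ℝ) (F : Fin K → X → X → ℝ) (hF : LinIndepModN E F)
    (ψ : (Fin K → ℝ) → ℝ) (κ : (Fin K → ℝ) → X → ℝ)
    (w : (Fin K → ℝ) → X → X → ℝ)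
    (hw : ∀ (θ : Fin K → ℝ) (x y : X), w θ x y = if (x, y) ∈ E then
        Real.exp (C x y + ∑ k : Fin K, θ k * F k x y + κ θ y - κ θ x - ψ θ) else 0)
    (hker : ∀ θ : Fin K → ℝ, IsMarkovKernel (w θ)) :
    StrictConvexOn ℝ Set.univ ψ := by
  constructor
  · exact convex_univ
  intro θ0 _ θ1 _ hne a b ha hb hab
  set θ2 : Fin K → ℝ := a • θ0 + b • θ1 with hθ2
  set φ : ℝ := a * ψ θ0 + b * ψ θ1 with hφ
  set u : X → ℝ := fun x => a * κ θ0 x + b * κ θ1 x - κ θ2 x with hu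
  have hwpos : ∀ (θ : Fin K → ℝ) (x y : X), (x, y) ∈ E → 0 < w θ x y := by
    intro θ x y h; rw [hw, if_pos h]; exact Real.exp_pos _
  have hwzero : ∀ (θ : Fin K → ℝ) (x y : X), (x, y) ∉ E → w θ x y = 0 := by
    intro θ x y h; rw [hw, if_neg h]
  have hwnn : ∀ (θ : Fin K → ℝ) (x y : X), 0 ≤ w θ x y := fun θ => (hker θ).1
  have hwsum : ∀ (θ : Fin K → ℝ) (x : X), ∑ y : X, w θ x y = 1 := fun θ => (hker θ).2
  -- the key identity
  have key : ∀ x y : X, (x, y) ∈ E →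
      w θ0 x y ^ a * w θ1 x y ^ b
        = w θ2 x y * Real.exp (u y - u x + (ψ θ2 - φ)) := by
    intro x y h
    rw [hw θ0, hw θ1, hw θ2, if_pos h, if_pos h, if_pos h,
      ← Real.exp_mul, ← Real.exp_mul, ← Real.exp_add, ← Real.exp_add]
    congr 1
    have hsum : ∑ k : Fin K, θ2 k * F k x y
        = a * ∑ k : Fin K, θ0 k * F k x y + b * ∑ k : Fin K, θ1 k * F k x y := by
      rw [Finset.mul_sum, Finset.mul_sum, ← Finset.sum_add_distrib]
      refine Finset.sum_congr rfl fun k _ => ?_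
      simp only [hθ2, Pi.add_apply, Pi.smul_apply, smul_eq_mul]; ring
    simp only [hu, hφ, hsum]
    linear_combination (C x y) * hab
  -- per-term AM-GM
  have amgm : ∀ x y : X, w θ0 x y ^ a * w θ1 x y ^ b
      ≤ a * w θ0 x y + b * w θ1 x y := fun x y =>
    Real.geom_mean_le_arith_mean2_weighted ha.le hb.le (hwnn θ0 x y) (hwnn θ1 x y) hab
  have hgeo0 : ∀ x y : X, (x, y) ∉ E → w θ0 x y ^ a * w θ1 x y ^ b = 0 := by
    intro x y h
    rw [hwzero θ0 x y h, Real.zero_rpow ha.ne', zero_mul]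
  have hsumg : ∀ x : X, ∑ y : X, w θ0 x y ^ a * w θ1 x y ^ b ≤ 1 := by
    intro x
    calc ∑ y : X, w θ0 x y ^ a * w θ1 x y ^ b
        ≤ ∑ y : X, (a * w θ0 x y + b * w θ1 x y) :=
          Finset.sum_le_sum fun y _ => amgm x y
      _ = a * ∑ y : X, w θ0 x y + b * ∑ y : X, w θ1 x y := by
          rw [Finset.sum_add_distrib, Finset.mul_sum, Finset.mul_sum]
      _ = 1 := by rw [hwsum, hwsum, mul_one, mul_one, hab]
  -- the T-sum bound, valid for all x
  have hT : ∀ x : X, ∑ y : X, w θ2 x y * Real.exp (u y - u x)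
      ≤ Real.exp (φ - ψ θ2) := by
    intro x
    have hterm : ∀ y : X, w θ2 x y * Real.exp (u y - u x)
        = w θ0 x y ^ a * w θ1 x y ^ b * Real.exp (φ - ψ θ2) := by
      intro y
      by_cases h : (x, y) ∈ E
      · have harg : (u y - u x + (ψ θ2 - φ)) + (φ - ψ θ2) = u y - u x := by ring
        rw [key x y h, mul_assoc, ← Real.exp_add, harg]
      · rw [hwzero θ2 x y h, hgeo0 x y h, zero_mul, zero_mul]
    calc ∑ y : X, w θ2 x y * Real.exp (u y - u x)
        = (∑ y : X, w θ0 x y ^ a * w θ1 x y ^ b) * Real.exp (φ - ψ θ2) := by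
          rw [Finset.sum_mul]; exact Finset.sum_congr rfl fun y _ => hterm y
      _ ≤ 1 * Real.exp (φ - ψ θ2) :=
          mul_le_mul_of_nonneg_right (hsumg x) (Real.exp_pos _).le
      _ = _ := one_mul _
  -- pick a minimizer of u
  obtain ⟨x0, -, hx0⟩ := Finset.exists_min_image Finset.univ u
    ⟨Classical.arbitrary X, Finset.mem_univ _⟩
  have hx0' : ∀ x : X, u x0 ≤ u x := fun x => hx0 x (Finset.mem_univ x)
  -- nonstrict convexity
  have hle : ψ θ2 ≤ φ := by
    have h1 : (1 : ℝ) ≤ ∑ y : X, w θ2 x0 y * Real.exp (u y - u x0) := by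
      calc (1 : ℝ) = ∑ y : X, w θ2 x0 y := (hwsum θ2 x0).symm
        _ ≤ ∑ y : X, w θ2 x0 y * Real.exp (u y - u x0) := by
            refine Finset.sum_le_sum fun y _ => ?_
            nth_rewrite 1 [← mul_one (w θ2 x0 y)]
            exact mul_le_mul_of_nonneg_left
              (Real.one_le_exp (by linarith [hx0' y])) (hwnn θ2 x0 y)
    have h2 : Real.exp 0 ≤ Real.exp (φ - ψ θ2) := by
      rw [Real.exp_zero]; exact h1.trans (hT x0)
    have := Real.exp_le_exp.1 h2
    linarith
  rcases lt_or_eq_of_le hle with h | heq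
  · exact h
  exfalso
  -- minimizers propagate along edges
  have hstep : ∀ x : X, u x = u x0 → ∀ y : X, (x, y) ∈ E → u y = u x0 := by
    intro x hx y hxy
    have hTx := hT x
    rw [← heq, sub_self, Real.exp_zero] at hTx
    have hnn : ∀ z : X, 0 ≤ w θ2 x z * (Real.exp (u z - u x) - 1) := by
      intro z
      refine mul_nonneg (hwnn θ2 x z) ?_
      have h1 : u x ≤ u z := hx ▸ hx0' z
      linarith [Real.one_le_exp (by linarith : (0:ℝ) ≤ u z - u x)]
    have hsum0 : ∑ z : X, w θ2 x z * (Real.exp (u z - u x) - 1) = 0 := by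
      have hge : (0:ℝ) ≤ ∑ z : X, w θ2 x z * (Real.exp (u z - u x) - 1) :=
        Finset.sum_nonneg fun z _ => hnn z
      have hsplit : ∑ z : X, w θ2 x z * (Real.exp (u z - u x) - 1)
          = (∑ z : X, w θ2 x z * Real.exp (u z - u x)) - ∑ z : X, w θ2 x z := by
        rw [← Finset.sum_sub_distrib]; exact Finset.sum_congr rfl fun z _ => by ring
      have hle' : ∑ z : X, w θ2 x z * (Real.exp (u z - u x) - 1) ≤ 0 := by
        rw [hsplit, hwsum θ2 x]; linarith
      linarith
    have hterm := (Finset.sum_eq_zero_iff_of_nonneg (fun z _ => hnn z)).1 hsum0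
      y (Finset.mem_univ y)
    rcases mul_eq_zero.1 hterm with h0 | h0
    · exact absurd h0 (hwpos θ2 x y hxy).ne'
    · have hone : Real.exp (u y - u x) = 1 := by linarith
      have := (Real.exp_eq_one_iff _).1 hone
      have hxy' : u y = u x := by linarith
      rw [hxy', hx]
  -- u is constant
  have huconst : ∀ x : X, u x = u x0 := by
    intro x
    induction hE x0 x with
    | refl => rfl
    | tail _ hedge ih => exact hstep _ ih _ hedge
  -- on edges the geometric mean equals w θ2
  have hgeo : ∀ x y : X, w θ0 x y ^ a * w θ1 x y ^ b = w θ2 x y := by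
    intro x y
    by_cases h : (x, y) ∈ E
    · rw [key x y h, huconst x, huconst y, ← heq]; simp
    · rw [hgeo0 x y h, hwzero θ2 x y h]
  -- termwise equality in AM-GM
  have heqterm : ∀ x y : X, (x, y) ∈ E →
      a * w θ0 x y + b * w θ1 x y = w θ0 x y ^ a * w θ1 x y ^ b := by
    intro x y hxy
    have hsum0 : ∑ z : X, (a * w θ0 x z + b * w θ1 x z - w θ0 x z ^ a * w θ1 x z ^ b) = 0 := by
      rw [Finset.sum_sub_distrib, Finset.sum_add_distrib, ← Finset.mul_sum, ← Finset.mul_sum,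
        hwsum, hwsum]
      have hg : ∑ z : X, w θ0 x z ^ a * w θ1 x z ^ b = ∑ z : X, w θ2 x z :=
        Finset.sum_congr rfl fun z _ => hgeo x z
      rw [hg, hwsum, mul_one, mul_one]; linarith
    have := (Finset.sum_eq_zero_iff_of_nonneg (fun z _ => by linarith [amgm x z])).1 hsum0
      y (Finset.mem_univ y)
    linarith
  -- hence w θ0 = w θ1 on edges
  have hweq : ∀ x y : X, (x, y) ∈ E → w θ0 x y = w θ1 x y := by
    intro x y hxy
    by_contra hne'
    exact absurd (heqterm x y hxy).symm
      (amgm_strict ha hb hab (hwpos θ0 x y hxy) (hwpos θ1 x y hxy) hne').ne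
  -- apply linear independence
  have hzero : (fun k => θ0 k - θ1 k) = 0 := by
    apply hF
    refine ⟨fun x => κ θ1 x - κ θ0 x, ψ θ1 - ψ θ0, fun x y hxy => ?_⟩
    have hwe := hweq x y hxy
    rw [hw θ0, hw θ1, if_pos hxy, if_pos hxy] at hwe
    have hexp := Real.exp_injective hwe
    have hS : ∑ k : Fin K, (θ0 k - θ1 k) * F k x y
        = (∑ k : Fin K, θ0 k * F k x y) - ∑ k : Fin K, θ1 k * F k x y := by
      rw [← Finset.sum_sub_distrib]; exact Finset.sum_congr rfl fun k _ => by ring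
    rw [hS]; beta_reduce; linarith
  have : θ0 = θ1 := funext fun k => sub_eq_zero.1 (congrFun hzero k)
  exact hne this
end

section
/- Let X be a finite nonempty set, E ⊆ X × X strongly connected, C, F_1, …, F_K : E → ℝ with F_1, …, F_K linearly independent modulo N, let 𝔈 be the exponential family generated by C, F_1, …, F_K, and let μ_1, …, μ_K ∈ ℝ with mixture family M = M(μ_1,…,μ_K). Then M ∩ 𝔈 contains at most one element: if w, w′ ∈ M ∩ 𝔈 then w = w′. -/
open scoped Classical
open Finset

open Filter Topology in
theorem exists_stationary {X : Type*} [Fintype X] [Nonempty X] (w : X → X → ℝ)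
    (hw : IsMarkovKernel w) : ∃ p : X → ℝ, IsStationaryDist w p := by
  obtain ⟨hw0, hw1⟩ := hw
  set T : (X → ℝ) → (X → ℝ) := fun p y => ∑ x, p x * w x y with hT
  set q : ℕ → X → ℝ := fun n => T^[n] (fun _ => (Fintype.card X : ℝ)⁻¹) with hq
  have hqsucc : ∀ n y, q (n+1) y = ∑ x, q n x * w x y := by
    intro n y
    have : q (n+1) = T (q n) := Function.iterate_succ_apply' T n _
    rw [this]
  have cardpos : (0:ℝ) < Fintype.card X := by
    have := Fintype.card_pos (α := X); exact_mod_cast this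
  have hq0 : ∀ n x, 0 ≤ q n x := by
    intro n
    induction n with
    | zero => intro x; simp [hq]
    | succ n ih =>
      intro x
      rw [hqsucc]
      exact Finset.sum_nonneg fun i _ => mul_nonneg (ih i) (hw0 i x)
  have hqsum : ∀ n, ∑ x, q n x = 1 := by
    intro n
    induction n with
    | zero =>
      simp [hq, Finset.sum_const, Finset.card_univ]
    | succ n ih =>
      calc ∑ y, q (n+1) y = ∑ y, ∑ x, q n x * w x y := by simp [hqsucc]
        _ = ∑ x, ∑ y, q n x * w x y := Finset.sum_comm
        _ = ∑ x, q n x * ∑ y, w x y := by simp [Finset.mul_sum]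
        _ = 1 := by simp [hw1, ih]
  have hq1 : ∀ n x, q n x ≤ 1 := fun n x => by
    calc q n x ≤ ∑ y, q n y := Finset.single_le_sum (fun i _ => hq0 n i) (mem_univ x)
      _ = 1 := hqsum n
  set u : ℕ → X → ℝ := fun N x => (∑ n ∈ Finset.range (N+1), q n x) / (N+1) with hu
  have hNpos : ∀ N : ℕ, (0:ℝ) < (N:ℝ) + 1 := fun N => by positivity
  have hu0 : ∀ N x, 0 ≤ u N x :=
    fun N x => div_nonneg (Finset.sum_nonneg fun i _ => hq0 i x) (hNpos N).le
  have hu1 : ∀ N x, u N x ≤ 1 := by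
    intro N x
    rw [hu, div_le_one (hNpos N)]
    calc ∑ n ∈ Finset.range (N+1), q n x ≤ ∑ n ∈ Finset.range (N+1), 1 :=
          Finset.sum_le_sum fun i _ => hq1 i x
      _ = (N:ℝ)+1 := by simp
  have husum : ∀ N, ∑ x, u N x = 1 := by
    intro N
    simp only [hu]
    rw [← Finset.sum_div, Finset.sum_comm]
    simp only [hqsum]
    rw [Finset.sum_const, Finset.card_range]
    field_simp
    simp [nsmul_eq_mul]
  -- compact box
  have hbox : IsCompact (Set.pi Set.univ fun _ : X => Set.Icc (0:ℝ) 1) :=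
    isCompact_univ_pi fun _ => isCompact_Icc
  have hmem : ∀ N, u N ∈ Set.pi Set.univ fun _ : X => Set.Icc (0:ℝ) 1 := by
    intro N
    rw [Set.mem_pi]
    intro x _
    exact ⟨hu0 N x, hu1 N x⟩
  obtain ⟨p, hpB, φ, hφ, hφlim⟩ := hbox.tendsto_subseq hmem
  have hc : ∀ x, Tendsto (fun N => u (φ N) x) atTop (𝓝 (p x)) :=
    fun x => ((continuous_apply x).tendsto p).comp hφlim
  have hp0 : ∀ x, 0 ≤ p x := by
    intro x
    exact (hpB x (Set.mem_univ x)).1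
  have hpsum : ∑ x, p x = 1 := by
    have h1 : Tendsto (fun N => ∑ x, u (φ N) x) atTop (𝓝 (∑ x, p x)) :=
      tendsto_finset_sum _ fun x _ => hc x
    have h2 : (fun N => ∑ x, u (φ N) x) = fun _ => (1:ℝ) := funext fun N => husum (φ N)
    rw [h2] at h1
    exact (tendsto_nhds_unique tendsto_const_nhds h1).symm
  refine ⟨p, hp0, hpsum, ?_⟩
  intro y
  have key : ∀ N, ∑ x, u N x * w x y = u N y + (q (N+1) y - q 0 y) / (N+1) := by
    intro N
    have e1 : ∑ x, u N x * w x y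
        = (∑ n ∈ Finset.range (N+1), ∑ x, q n x * w x y) / (N+1) :=
      calc ∑ x, u N x * w x y
          = ∑ x, (∑ n ∈ Finset.range (N+1), q n x * w x y)/((N:ℝ)+1) := by
            refine Finset.sum_congr rfl fun x _ => ?_
            rw [hu, div_mul_eq_mul_div, Finset.sum_mul]
        _ = (∑ x, ∑ n ∈ Finset.range (N+1), q n x * w x y)/((N:ℝ)+1) := by
            rw [Finset.sum_div]
        _ = (∑ n ∈ Finset.range (N+1), ∑ x, q n x * w x y) / ((N:ℝ)+1) := by
            rw [Finset.sum_comm]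
    rw [e1]
    have e2 : ∑ n ∈ Finset.range (N+1), ∑ x, q n x * w x y
        = ∑ n ∈ Finset.range (N+1), q (n+1) y := by
      refine Finset.sum_congr rfl fun n _ => (hqsucc n y).symm
    rw [e2]
    have e3 : ∑ n ∈ Finset.range (N+1), q (n+1) y
        = ∑ n ∈ Finset.range (N+1), q n y + q (N+1) y - q 0 y := by
      have := Finset.sum_range_succ' (fun n => q n y) (N+1)
      have h4 := Finset.sum_range_succ (fun n => q n y) (N+1)
      linarith [this, h4]
    rw [e3, hu]
    ring
  have h1 : Tendsto (fun N => ∑ x, u (φ N) x * w x y) atTop (𝓝 (∑ x, p x * w x y)) :=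
    tendsto_finset_sum _ fun x _ => (hc x).mul_const (w x y)
  have hb0 : Tendsto (fun N : ℕ => 2 / ((N:ℝ)+1)) atTop (𝓝 0) := by
    have := tendsto_one_div_add_atTop_nhds_zero_nat (𝕜 := ℝ)
    have h2 := this.const_mul 2
    simpa [div_eq_mul_inv, mul_assoc] using h2
  have h2 : Tendsto (fun N => (q (φ N + 1) y - q 0 y) / ((φ N : ℝ)+1)) atTop (𝓝 0) := by
    refine squeeze_zero_norm (a := fun N : ℕ => 2 / ((N:ℝ)+1)) ?_ hb0
    intro N
    rw [Real.norm_eq_abs, abs_div, abs_of_pos (hNpos (φ N))]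
    have hnum : |q (φ N + 1) y - q 0 y| ≤ 2 := by
      have := hq0 (φ N + 1) y; have := hq1 (φ N + 1) y
      have := hq0 0 y; have := hq1 0 y
      rw [abs_le]; constructor <;> linarith
    have hden : ((N:ℝ)+1) ≤ ((φ N : ℝ)+1) := by
      have h5 : (N:ℝ) ≤ (φ N : ℝ) := Nat.cast_le.mpr hφ.le_apply
      linarith
    calc |q (φ N + 1) y - q 0 y| / ((φ N:ℝ)+1) ≤ 2 / ((φ N:ℝ)+1) :=
          (div_le_div_iff_of_pos_right (hNpos (φ N))).mpr hnum
      _ ≤ 2 / ((N:ℝ)+1) := by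
          apply div_le_div_of_nonneg_left (by norm_num) (hNpos N) hden
  have h3 : Tendsto (fun N => u (φ N) y + (q (φ N + 1) y - q 0 y) / ((φ N : ℝ)+1))
      atTop (𝓝 (p y + 0)) := (hc y).add h2
  rw [add_zero] at h3
  have h4 : (fun N => ∑ x, u (φ N) x * w x y)
      = fun N => u (φ N) y + (q (φ N + 1) y - q 0 y) / ((φ N : ℝ)+1) :=
    funext fun N => key (φ N)
  rw [h4] at h1
  exact tendsto_nhds_unique h1 h3

lemma stationary_pos {X : Type*} [Fintype X] (E : Set (X × X))
    (hE : StronglyConnected E) (w : X → X → ℝ) (hw : MemW E w)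
    (p : X → ℝ) (hp : IsStationaryDist w p) : ∀ y, 0 < p y := by
  obtain ⟨hwK, hwE⟩ := hw
  obtain ⟨hp0, hp1, hps⟩ := hp
  obtain ⟨x0, -, hx0⟩ : ∃ x ∈ Finset.univ (α := X), 0 < p x := by
    by_contra hcon
    push_neg at hcon
    have : ∑ x, p x = 0 :=
      Finset.sum_eq_zero fun x hx => le_antisymm (hcon x hx) (hp0 x)
    rw [this] at hp1
    norm_num at hp1
  intro y
  have step : ∀ a b : X, (a,b) ∈ E → 0 < p a → 0 < p b := by
    intro a b hab hpa
    have hle : p a * w a b ≤ ∑ x, p x * w x b :=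
      Finset.single_le_sum (fun i _ => mul_nonneg (hp0 i) (hwK.1 i b)) (mem_univ a)
    have hpos : 0 < p a * w a b := mul_pos hpa ((hwE a b).2 hab)
    rw [hps b] at hle
    linarith
  have hrel := hE x0 y
  induction hrel with
  | refl => exact hx0
  | tail _ e ih => exact step _ _ e ih

lemma log_term_nonneg (a b : ℝ) (ha : 0 < a) (hb : 0 < b) :
    0 ≤ a * (Real.log a - Real.log b) - a + b := by
  have h := Real.log_le_sub_one_of_pos (div_pos hb ha)
  rw [Real.log_div hb.ne' ha.ne'] at h
  have h2 : a * (Real.log b - Real.log a) ≤ a * (b/a - 1) :=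
    mul_le_mul_of_nonneg_left h ha.le
  have h3 : a * (b/a - 1) = b - a := by field_simp
  nlinarith

lemma log_term_eq_zero (a b : ℝ) (ha : 0 < a) (hb : 0 < b)
    (h : a * (Real.log a - Real.log b) - a + b = 0) : a = b := by
  by_contra hne
  have hne' : b / a ≠ 1 := by
    intro hc
    exact hne ((div_eq_one_iff_eq ha.ne').mp hc).symm
  have h1 := Real.log_lt_sub_one_of_pos (div_pos hb ha) hne'
  rw [Real.log_div hb.ne' ha.ne'] at h1
  have h2 : a * (Real.log b - Real.log a) < a * (b/a - 1) :=
    mul_lt_mul_of_pos_left h1 ha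
  have h3 : a * (b/a - 1) = b - a := by field_simp
  nlinarith

lemma key_sum {X : Type*} [Fintype X] (E : Set (X × X)) {K : ℕ}
    (F : Fin K → X → X → ℝ) (u : X → X → ℝ) (p : X → ℝ)
    (hu0 : ∀ x y : X, (x,y) ∉ E → u x y = 0)
    (husum : ∀ x : X, ∑ y, u x y = 1)
    (hp1 : ∑ x, p x = 1)
    (hstat : ∀ y : X, ∑ x, p x * u x y = p y)
    (c : Fin K → ℝ) (δ : X → ℝ) (e : ℝ) :
    ∑ x : X, ∑ y : X,
      (if (x,y) ∈ E then p x * u x y * ((∑ k, c k * F k x y) + δ y - δ x - e) else 0)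
      = (∑ k, c k * (∑ x : X, ∑ y : X, if (x,y) ∈ E then p x * u x y * F k x y else 0)) - e := by
  have hL : ∑ x : X, ∑ y : X,
      (if (x,y) ∈ E then p x * u x y * ((∑ k, c k * F k x y) + δ y - δ x - e) else 0)
      = ∑ x : X, ∑ y : X, p x * u x y * ((∑ k, c k * F k x y) + δ y - δ x - e) :=
    Finset.sum_congr rfl fun x _ => Finset.sum_congr rfl fun y _ => by
      split_ifs with h
      · rfl
      · simp [hu0 x y h]
  have hR : ∀ k, (∑ x : X, ∑ y : X, if (x,y) ∈ E then p x * u x y * F k x y else 0)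
      = ∑ x : X, ∑ y : X, p x * u x y * F k x y :=
    fun k => Finset.sum_congr rfl fun x _ => Finset.sum_congr rfl fun y _ => by
      split_ifs with h
      · rfl
      · simp [hu0 x y h]
  rw [hL]
  have expand : ∑ x : X, ∑ y : X, p x * u x y * ((∑ k, c k * F k x y) + δ y - δ x - e)
      = ∑ x : X, ∑ y : X,
        (p x * u x y * (∑ k, c k * F k x y) + p x * u x y * δ y
          - p x * u x y * δ x - p x * u x y * e) :=
    Finset.sum_congr rfl fun x _ => Finset.sum_congr rfl fun y _ => by ring
  rw [expand]
  simp only [Finset.sum_sub_distrib, Finset.sum_add_distrib]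
  have P1 : ∑ x : X, ∑ y : X, p x * u x y * (∑ k, c k * F k x y)
      = ∑ k, c k * ∑ x : X, ∑ y : X, p x * u x y * F k x y := by
    have e1 : ∑ x : X, ∑ y : X, p x * u x y * (∑ k, c k * F k x y)
        = ∑ x : X, ∑ y : X, ∑ k, c k * (p x * u x y * F k x y) :=
      Finset.sum_congr rfl fun x _ => Finset.sum_congr rfl fun y _ => by
        rw [Finset.mul_sum]
        exact Finset.sum_congr rfl fun k _ => by ring
    rw [e1]
    rw [show (∑ x : X, ∑ y : X, ∑ k, c k * (p x * u x y * F k x y))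
        = ∑ k, ∑ x : X, ∑ y : X, c k * (p x * u x y * F k x y) from
      (Finset.sum_congr rfl fun x _ => Finset.sum_comm).trans Finset.sum_comm]
    refine Finset.sum_congr rfl fun k _ => ?_
    rw [Finset.mul_sum]
    exact Finset.sum_congr rfl fun x _ => (Finset.mul_sum _ _ _).symm
  have P2 : ∑ x : X, ∑ y : X, p x * u x y * δ y = ∑ y : X, p y * δ y := by
    rw [Finset.sum_comm]
    refine Finset.sum_congr rfl fun y _ => ?_
    rw [← hstat y, Finset.sum_mul]
  have P3 : ∑ x : X, ∑ y : X, p x * u x y * δ x = ∑ x : X, p x * δ x := by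
    refine Finset.sum_congr rfl fun x _ => ?_
    have : ∀ y : X, p x * u x y * δ x = p x * δ x * u x y := fun y => by ring
    simp only [this]
    rw [← Finset.mul_sum, husum x, mul_one]
  have P4 : ∑ x : X, ∑ y : X, p x * u x y * e = e := by
    have : ∀ x y : X, p x * u x y * e = p x * e * u x y := fun x y => by ring
    simp only [this]
    have e2 : ∀ x : X, ∑ y : X, p x * e * u x y = p x * e := fun x => by
      rw [← Finset.mul_sum, husum x, mul_one]
    simp only [e2]
    rw [← Finset.sum_mul, hp1, one_mul]
  rw [P1, P2, P3, P4]
  have : ∑ k, c k * ∑ x : X, ∑ y : X, p x * u x y * F k x y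
      = ∑ k, c k * (∑ x : X, ∑ y : X, if (x,y) ∈ E then p x * u x y * F k x y else 0) :=
    Finset.sum_congr rfl fun k _ => by rw [hR k]
  rw [this]
  ring

lemma mass_sum {X : Type*} [Fintype X] (E : Set (X × X)) (u : X → X → ℝ) (p : X → ℝ)
    (hu0 : ∀ x y : X, (x,y) ∉ E → u x y = 0)
    (husum : ∀ x : X, ∑ y, u x y = 1)
    (hp1 : ∑ x, p x = 1) :
    ∑ x : X, ∑ y : X, (if (x,y) ∈ E then p x * u x y else 0) = 1 := by
  have hL : ∑ x : X, ∑ y : X, (if (x,y) ∈ E then p x * u x y else 0)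
      = ∑ x : X, ∑ y : X, p x * u x y :=
    Finset.sum_congr rfl fun x _ => Finset.sum_congr rfl fun y _ => by
      split_ifs with h
      · rfl
      · simp [hu0 x y h]
  rw [hL]
  have : ∀ x : X, ∑ y : X, p x * u x y = p x := fun x => by
    rw [← Finset.mul_sum, husum x, mul_one]
  simp only [this]
  exact hp1

/-- the intersection of the mixture and exponential families
contains at most one element. -/
theorem stmt_10 {X : Type*} [Fintype X] [Nonempty X] (E : Set (X × X))
    (hE : StronglyConnected E) (K : ℕ)
    (C : X → X → ℝ) (F : Fin K → X → X → ℝ) (hF : LinIndepModN E F)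
    (μ : Fin K → ℝ) (w w' : X → X → ℝ)
    (h : MemMix E F μ w ∧ MemExpFam E C F w)
    (h' : MemMix E F μ w' ∧ MemExpFam E C F w') :
    w = w' := by

  obtain ⟨⟨hwW, hwMix⟩, -, θ, κ, ψ, hwExp⟩ := h
  obtain ⟨⟨hw'W, hw'Mix⟩, -, θ', κ', ψ', hw'Exp⟩ := h'
  -- basic facts about w, w'
  have hw0 : ∀ x y : X, (x,y) ∉ E → w x y = 0 := by
    intro x y hne
    have h1 : ¬ 0 < w x y := fun hlt => hne ((hwW.2 x y).1 hlt)
    have h2 := hwW.1.1 x y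
    linarith [not_lt.mp h1]
  have hw'0 : ∀ x y : X, (x,y) ∉ E → w' x y = 0 := by
    intro x y hne
    have h1 : ¬ 0 < w' x y := fun hlt => hne ((hw'W.2 x y).1 hlt)
    linarith [not_lt.mp h1, hw'W.1.1 x y]
  have hwpos : ∀ x y : X, (x,y) ∈ E → 0 < w x y := fun x y hxy => (hwW.2 x y).2 hxy
  have hw'pos : ∀ x y : X, (x,y) ∈ E → 0 < w' x y := fun x y hxy => (hw'W.2 x y).2 hxy
  -- stationary distributions
  have hpex : ∃ p : X → ℝ, IsStationaryDist w p := exists_stationary w hwW.1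
  have hp'ex : ∃ p : X → ℝ, IsStationaryDist w' p := exists_stationary w' hw'W.1
  have hp : IsStationaryDist w (statDist w) := by
    rw [statDist, dif_pos hpex]; exact hpex.choose_spec
  have hp' : IsStationaryDist w' (statDist w') := by
    rw [statDist, dif_pos hp'ex]; exact hp'ex.choose_spec
  set p : X → ℝ := statDist w with hpdef
  set p' : X → ℝ := statDist w' with hp'def
  have hppos : ∀ y, 0 < p y := stationary_pos E hE w ⟨hwW.1, hwW.2⟩ p hp
  have hp'pos : ∀ y, 0 < p' y := stationary_pos E hE w' ⟨hw'W.1, hw'W.2⟩ p' hp'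
  -- log identity on E
  have hlog : ∀ x y : X, (x,y) ∈ E →
      Real.log (w x y) - Real.log (w' x y)
        = (∑ k, (θ k - θ' k) * F k x y) + (κ y - κ' y) - (κ x - κ' x) - (ψ - ψ') := by
    intro x y hxy
    rw [hwExp x y hxy, hw'Exp x y hxy, Real.log_exp, Real.log_exp]
    have : ∑ k, (θ k - θ' k) * F k x y
        = (∑ k, θ k * F k x y) - ∑ k, θ' k * F k x y := by
      rw [← Finset.sum_sub_distrib]
      exact Finset.sum_congr rfl fun k _ => by ring
    rw [this]
    ring
  -- the two divergence computations
  have hA : ∑ x : X, ∑ y : X,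
      (if (x,y) ∈ E then p x * w x y * (Real.log (w x y) - Real.log (w' x y)) else 0)
      = (∑ k, (θ k - θ' k) * μ k) - (ψ - ψ') := by
    have step1 : ∑ x : X, ∑ y : X,
        (if (x,y) ∈ E then p x * w x y * (Real.log (w x y) - Real.log (w' x y)) else 0)
        = ∑ x : X, ∑ y : X, (if (x,y) ∈ E then
            p x * w x y * ((∑ k, (θ k - θ' k) * F k x y)
              + (fun z => κ z - κ' z) y - (fun z => κ z - κ' z) x - (ψ - ψ')) else 0) :=
      Finset.sum_congr rfl fun x _ => Finset.sum_congr rfl fun y _ => by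
        split_ifs with hxy
        · rw [hlog x y hxy]
        · rfl
    rw [step1, key_sum E F w p hw0 hwW.1.2 hp.2.1 hp.2.2]
    congr 1
    exact Finset.sum_congr rfl fun k _ => by rw [hwMix k]
  have hA' : ∑ x : X, ∑ y : X,
      (if (x,y) ∈ E then p' x * w' x y * (Real.log (w x y) - Real.log (w' x y)) else 0)
      = (∑ k, (θ k - θ' k) * μ k) - (ψ - ψ') := by
    have step1 : ∑ x : X, ∑ y : X,
        (if (x,y) ∈ E then p' x * w' x y * (Real.log (w x y) - Real.log (w' x y)) else 0)
        = ∑ x : X, ∑ y : X, (if (x,y) ∈ E then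
            p' x * w' x y * ((∑ k, (θ k - θ' k) * F k x y)
              + (fun z => κ z - κ' z) y - (fun z => κ z - κ' z) x - (ψ - ψ')) else 0) :=
      Finset.sum_congr rfl fun x _ => Finset.sum_congr rfl fun y _ => by
        split_ifs with hxy
        · rw [hlog x y hxy]
        · rfl
    rw [step1, key_sum E F w' p' hw'0 hw'W.1.2 hp'.2.1 hp'.2.2]
    congr 1
    exact Finset.sum_congr rfl fun k _ => by rw [hw'Mix k]
  -- total masses
  have hB1 := mass_sum E w p hw0 hwW.1.2 hp.2.1
  have hB2 := mass_sum E w' p hw'0 hw'W.1.2 hp.2.1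
  have hB3 := mass_sum E w' p' hw'0 hw'W.1.2 hp'.2.1
  have hB4 := mass_sum E w p' hw0 hwW.1.2 hp'.2.1
  -- the combined nonnegative sum is zero
  have hTsum : ∑ x : X, ∑ y : X,
      (if (x,y) ∈ E then
        p x * (w x y * (Real.log (w x y) - Real.log (w' x y)) - w x y + w' x y)
        + p' x * (w' x y * (Real.log (w' x y) - Real.log (w x y)) - w' x y + w x y)
      else 0) = 0 := by
    have split : ∀ x y : X,
        (if (x,y) ∈ E then
          p x * (w x y * (Real.log (w x y) - Real.log (w' x y)) - w x y + w' x y)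
          + p' x * (w' x y * (Real.log (w' x y) - Real.log (w x y)) - w' x y + w x y)
        else 0)
        = (if (x,y) ∈ E then p x * w x y * (Real.log (w x y) - Real.log (w' x y)) else 0)
          - (if (x,y) ∈ E then p x * w x y else 0)
          + (if (x,y) ∈ E then p x * w' x y else 0)
          - (if (x,y) ∈ E then p' x * w' x y * (Real.log (w x y) - Real.log (w' x y)) else 0)
          - (if (x,y) ∈ E then p' x * w' x y else 0)
          + (if (x,y) ∈ E then p' x * w x y else 0) := by
      intro x y
      split_ifs with hxy
      · ring
      · ring
    simp only [split]
    simp only [Finset.sum_add_distrib, Finset.sum_sub_distrib]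
    rw [hA, hA', hB1, hB2, hB3, hB4]
    ring
  -- pointwise nonnegativity
  have hnn : ∀ x y : X, 0 ≤
      (if (x,y) ∈ E then
        p x * (w x y * (Real.log (w x y) - Real.log (w' x y)) - w x y + w' x y)
        + p' x * (w' x y * (Real.log (w' x y) - Real.log (w x y)) - w' x y + w x y)
      else 0) := by
    intro x y
    split_ifs with hxy
    · have h1 := log_term_nonneg (w x y) (w' x y) (hwpos x y hxy) (hw'pos x y hxy)
      have h2 := log_term_nonneg (w' x y) (w x y) (hw'pos x y hxy) (hwpos x y hxy)
      exact add_nonneg (mul_nonneg (hppos x).le h1) (mul_nonneg (hp'pos x).le h2)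
    · exact le_refl 0
  -- each term vanishes
  have hzero : ∀ x y : X,
      (if (x,y) ∈ E then
        p x * (w x y * (Real.log (w x y) - Real.log (w' x y)) - w x y + w' x y)
        + p' x * (w' x y * (Real.log (w' x y) - Real.log (w x y)) - w' x y + w x y)
      else 0) = 0 := by
    intro x y
    have houter := (Finset.sum_eq_zero_iff_of_nonneg
      (fun x _ => Finset.sum_nonneg fun y _ => hnn x y)).mp hTsum x (mem_univ x)
    exact (Finset.sum_eq_zero_iff_of_nonneg (fun y _ => hnn x y)).mp houter y (mem_univ y)
  funext x y
  by_cases hxy : (x,y) ∈ E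
  · have hz := hzero x y
    rw [if_pos hxy] at hz
    have h1 := log_term_nonneg (w x y) (w' x y) (hwpos x y hxy) (hw'pos x y hxy)
    have h2 := log_term_nonneg (w' x y) (w x y) (hw'pos x y hxy) (hwpos x y hxy)
    have hg1 : p x * (w x y * (Real.log (w x y) - Real.log (w' x y)) - w x y + w' x y) = 0 := by
      nlinarith [mul_nonneg (hppos x).le h1, mul_nonneg (hp'pos x).le h2]
    have hA1 : w x y * (Real.log (w x y) - Real.log (w' x y)) - w x y + w' x y = 0 :=
      (mul_eq_zero.mp hg1).resolve_left (hppos x).ne'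
    exact log_term_eq_zero (w x y) (w' x y) (hwpos x y hxy) (hw'pos x y hxy) hA1
  · rw [hw0 x y hxy, hw'0 x y hxy]
end

section
/- Let X be a finite nonempty set, H : X × X → ℝ, and r a strictly positive probability distribution on X. Suppose (κ, δ) and (κ′, δ′), with κ, κ′, δ, δ′ : X → ℝ, both have the property that w(y|x) = exp(H(x,y) + κ(y) − κ(x) − δ(y)) (respectively with κ′, δ′) is a Markov kernel on X with stationary distribution r. Then δ = δ′ and there is a constant c ∈ ℝ with κ′(x) = κ(x) + c for all x ∈ X. -/
open scoped Classical
open Finset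

/-- uniqueness of delta, and of kappa up to an additive constant,
for the minimum information Markov kernel. -/
theorem stmt_16 {X : Type*} [Fintype X] [Nonempty X] (H : X → X → ℝ)
    (r : X → ℝ) (hr : ∀ x : X, 0 < r x) (hrsum : ∑ x : X, r x = 1)
    (κ κ' δ δ' : X → ℝ)
    (hker : ∀ x : X, ∑ y : X, Real.exp (H x y + κ y - κ x - δ y) = 1)
    (hstat : ∀ y : X, ∑ x : X, Real.exp (H x y + κ y - κ x - δ y) * r x = r y)
    (hker' : ∀ x : X, ∑ y : X, Real.exp (H x y + κ' y - κ' x - δ' y) = 1)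
    (hstat' : ∀ y : X, ∑ x : X, Real.exp (H x y + κ' y - κ' x - δ' y) * r x = r y) :
    δ = δ' ∧ ∃ c : ℝ, ∀ x : X, κ' x = κ x + c := by
  classical
  set A : X → ℝ := fun x => Real.exp (κ' x - κ x) with hA
  set B : X → ℝ := fun y => Real.exp (κ' y - κ y - (δ' y - δ y)) with hB
  set w : X → X → ℝ := fun x y => Real.exp (H x y + κ y - κ x - δ y) with hw
  have hwpos : ∀ x y, 0 < w x y := fun x y => Real.exp_pos _
  have hApos : ∀ x, 0 < A x := fun x => Real.exp_pos _
  have hBpos : ∀ x, 0 < B x := fun x => Real.exp_pos _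
  have hw' : ∀ x y, Real.exp (H x y + κ' y - κ' x - δ' y) = w x y * B y / A x := by
    intro x y
    rw [hw, hA, hB]
    rw [← Real.exp_add, ← Real.exp_sub]
    congr 1; ring
  -- key identity 1
  have key1 : ∀ x, ∑ y, w x y * B y = A x := by
    intro x
    have h := hker' x
    simp only [hw'] at h
    rw [← Finset.sum_div, div_eq_one_iff_eq (hApos x).ne'] at h
    exact h
  -- key identity 2
  have key2 : ∀ y, ∑ x, w x y * r x / A x = r y / B y := by
    intro y
    have h := hstat' y
    simp only [hw'] at h
    have : ∑ x, w x y * B y / A x * r x = B y * ∑ x, w x y * r x / A x := by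
      rw [Finset.mul_sum]; apply Finset.sum_congr rfl; intro x _; ring
    rw [this] at h
    field_simp
    rw [eq_div_iff (hBpos y).ne']
    linarith [h, mul_comm (B y) (∑ x, w x y * r x / A x)]
  obtain ⟨x1, -, hx1⟩ := Finset.exists_max_image Finset.univ A ⟨Classical.arbitrary X, Finset.mem_univ _⟩
  obtain ⟨y0, -, hy0⟩ := Finset.exists_max_image Finset.univ B ⟨Classical.arbitrary X, Finset.mem_univ _⟩
  -- Step 1 : A x1 ≤ B y0
  have step1 : A x1 ≤ B y0 := by
    rw [← key1 x1]
    calc ∑ y, w x1 y * B y ≤ ∑ y, w x1 y * B y0 := by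
          apply Finset.sum_le_sum
          intro y _
          exact mul_le_mul_of_nonneg_left (hy0 y (Finset.mem_univ y)) (hwpos x1 y).le
      _ = B y0 := by rw [← Finset.sum_mul, hker x1, one_mul]
  -- Step 2 : B y0 ≤ A x1
  have step2 : B y0 ≤ A x1 := by
    have h1 : r y0 / A x1 ≤ r y0 / B y0 := by
      rw [← key2 y0]
      calc r y0 / A x1 = (∑ x, w x y0 * r x) / A x1 := by rw [hstat y0]
        _ = ∑ x, w x y0 * r x / A x1 := by rw [Finset.sum_div]
        _ ≤ ∑ x, w x y0 * r x / A x := by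
            apply Finset.sum_le_sum
            intro x _
            apply div_le_div_of_nonneg_left _ (hApos x) (hx1 x (Finset.mem_univ x))
            exact mul_nonneg (hwpos x y0).le (hr x).le
    rw [div_le_div_iff₀ (hApos x1) (hBpos y0)] at h1
    exact le_of_mul_le_mul_left (by linarith [h1]) (hr y0)
  have hAB : A x1 = B y0 := le_antisymm step1 step2
  -- Step 3 : B constant
  have hBconst : ∀ y, B y = B y0 := by
    have hsum : ∑ y, w x1 y * B y = ∑ y, w x1 y * B y0 := by
      rw [key1, ← Finset.sum_mul, hker x1, one_mul, hAB]
    have := (Finset.sum_eq_sum_iff_of_le (by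
      intro y _
      exact mul_le_mul_of_nonneg_left (hy0 y (Finset.mem_univ y)) (hwpos x1 y).le)).mp hsum
    intro y
    exact mul_left_cancel₀ (hwpos x1 y).ne' (this y (Finset.mem_univ y))
  -- Step 4 : A constant
  have hAconst : ∀ x, A x = B y0 := by
    intro x
    rw [← key1 x]
    calc ∑ y, w x y * B y = ∑ y, w x y * B y0 := by
          apply Finset.sum_congr rfl; intro y _; rw [hBconst y]
      _ = B y0 := by rw [← Finset.sum_mul, hker x, one_mul]
  constructor
  · funext y
    have h : B y = A y := by rw [hBconst y, hAconst y]
    rw [hB, hA] at h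
    have := Real.exp_injective h
    linarith
  · refine ⟨κ' x1 - κ x1, fun x => ?_⟩
    have h : A x = A x1 := by rw [hAconst x, hAconst x1]
    rw [hA] at h
    have := Real.exp_injective h
    linarith
end
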